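/- arXiv:2509.00719 — 9 statements merged into one kernel-verified Lean document; each statement's English description precedes it below -/
import Mathlib

section
/- (Equivalence theorem for D-optimality on a finite candidate set.) A nonsingular approximate design w is D-optimal if and only if max_{i∈{1,…,N}} v_i(w) = m. Moreover, if w*∞ is a D-optimal approximate design, then every support index ℓ of any D-optimal approximate design satisfies v*_ℓ = m. -/
open Matrix BigOperators

/-- An approximate design: nonnegative weights summing to one. -/
def IsDesign {N : ℕ} (w : Fin N → ℝ) : Prop :=
  (∀ i, 0 ≤ w i) ∧ ∑ i, w i = 1

/-- An exact design of size `n`: an approximate design with `n * w i` an integer for all `i`. -/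
def IsExactDesign {N : ℕ} (n : ℕ) (w : Fin N → ℝ) : Prop :=
  IsDesign w ∧ ∀ i, ∃ z : ℤ, (n : ℝ) * w i = (z : ℝ)

/-- The information matrix `M(w) = ∑ i, w i • f i (f i)ᵀ`. -/
noncomputable def infoMatrix {N m : ℕ} (f : Fin N → Fin m → ℝ) (w : Fin N → ℝ) :
    Matrix (Fin m) (Fin m) ℝ :=
  ∑ i, w i • vecMulVec (f i) (f i)

/-- The D-criterion `Φ(M) = det(M)^(1/m)`. -/
noncomputable def Dcrit {m : ℕ} (M : Matrix (Fin m) (Fin m) ℝ) : ℝ :=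
  M.det ^ ((1 : ℝ) / (m : ℝ))

/-- A D-optimal approximate design. -/
def IsDOptimalApprox {N m : ℕ} (f : Fin N → Fin m → ℝ) (w : Fin N → ℝ) : Prop :=
  IsDesign w ∧ ∀ w' : Fin N → ℝ, IsDesign w' →
    Dcrit (infoMatrix f w') ≤ Dcrit (infoMatrix f w)

/-- A D-optimal exact design of size `n`. -/
def IsDOptimalExact {N m : ℕ} (f : Fin N → Fin m → ℝ) (n : ℕ) (w : Fin N → ℝ) : Prop :=
  IsExactDesign n w ∧ ∀ w' : Fin N → ℝ, IsExactDesign n w' →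
    Dcrit (infoMatrix f w') ≤ Dcrit (infoMatrix f w)

/-- The variance function `v_i(w) = f iᵀ M(w)⁻¹ f i`. -/
noncomputable def varfun {N m : ℕ} (f : Fin N → Fin m → ℝ) (w : Fin N → ℝ) (i : Fin N) : ℝ :=
  f i ⬝ᵥ (infoMatrix f w)⁻¹ *ᵥ f i

/-! ### Auxiliary lemmas -/

section Aux

lemma KW.trace_mul_vecMulVec {m' : ℕ} (A : Matrix (Fin m') (Fin m') ℝ) (u : Fin m' → ℝ) :
    (A * vecMulVec u u).trace = u ⬝ᵥ A *ᵥ u := by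
  simp only [Matrix.trace, Matrix.diag, Matrix.mul_apply, vecMulVec_apply,
    dotProduct, mulVec, Finset.mul_sum]
  exact Finset.sum_congr rfl fun i _ => Finset.sum_congr rfl fun k _ => by ring

lemma KW.posSemidef_smul_vecMulVec {m' : ℕ} {c : ℝ} (hc : 0 ≤ c) (u : Fin m' → ℝ) :
    (c • vecMulVec u u).PosSemidef := by
  refine Matrix.PosSemidef.of_dotProduct_mulVec_nonneg ?_ ?_
  · ext i j
    simp only [conjTranspose_apply, Matrix.smul_apply, vecMulVec_apply, star_trivial, smul_eq_mul]
    ring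
  · intro x
    have h1 : (c • vecMulVec u u) *ᵥ x = fun j => c * u j * (u ⬝ᵥ x) := by
      ext j
      simp only [mulVec, dotProduct, Matrix.smul_apply, vecMulVec_apply, smul_eq_mul, Finset.mul_sum]
      exact Finset.sum_congr rfl fun k _ => by ring
    rw [h1]
    simp only [star_trivial]
    show 0 ≤ ∑ i, x i * (c * u i * (u ⬝ᵥ x))
    have h2 : ∑ i, x i * (c * u i * (u ⬝ᵥ x)) = c * (u ⬝ᵥ x) * ∑ i, u i * x i := by
      rw [Finset.mul_sum]
      exact Finset.sum_congr rfl fun i _ => by ring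
    have h3 : ∑ i, u i * x i = u ⬝ᵥ x := rfl
    rw [h2, h3]
    nlinarith [sq_nonneg (u ⬝ᵥ x)]

lemma KW.infoMatrix_posSemidef {N m : ℕ} (f : Fin N → Fin m → ℝ) {w : Fin N → ℝ}
    (hw : ∀ i, 0 ≤ w i) : (infoMatrix f w).PosSemidef := by
  unfold infoMatrix
  exact Finset.sum_induction _ (fun M : Matrix (Fin m) (Fin m) ℝ => M.PosSemidef)
    (fun A B hA hB => hA.add hB) Matrix.PosSemidef.zero
    (fun i _ => KW.posSemidef_smul_vecMulVec (hw i) (f i))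

lemma KW.trace_eq_sum_eigenvalues {m' : ℕ} (A : Matrix (Fin m') (Fin m') ℝ)
    (hA : A.IsHermitian) : A.trace = ∑ i, hA.eigenvalues i := by
  simpa using hA.trace_eq_sum_eigenvalues

lemma KW.posSemidef_det_nonneg {m' : ℕ} {A : Matrix (Fin m') (Fin m') ℝ}
    (hA : A.PosSemidef) : 0 ≤ A.det := by
  rw [hA.1.det_eq_prod_eigenvalues]
  exact Finset.prod_nonneg fun i _ => by exact_mod_cast hA.eigenvalues_nonneg i

lemma KW.det_le_exp_trace {m' : ℕ} {C : Matrix (Fin m') (Fin m') ℝ} (hC : C.PosSemidef) :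
    C.det ≤ Real.exp (C.trace - m') := by
  have hd : C.det = ∏ i, hC.1.eigenvalues i := by
    rw [hC.1.det_eq_prod_eigenvalues]; norm_num
  have ht : C.trace = ∑ i, hC.1.eigenvalues i := KW.trace_eq_sum_eigenvalues C hC.1
  rw [hd, ht]
  calc ∏ i, hC.1.eigenvalues i ≤ ∏ i, Real.exp (hC.1.eigenvalues i - 1) := by
        apply Finset.prod_le_prod (fun i _ => hC.eigenvalues_nonneg i)
        intro i _
        have := Real.add_one_le_exp (hC.1.eigenvalues i - 1)
        linarith
    _ = Real.exp (∑ i, (hC.1.eigenvalues i - 1)) := by rw [Real.exp_sum]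
    _ = Real.exp ((∑ i, hC.1.eigenvalues i) - m') := by
        rw [Finset.sum_sub_distrib]
        simp [Finset.card_univ]

open scoped MatrixOrder in
/-- Concavity-type inequality: for psd `A` with nonzero determinant and psd `B`,
`det B ≤ det A * exp (tr (A⁻¹ B) - m)`. -/
lemma KW.det_le_det_mul_exp {m' : ℕ} {A B : Matrix (Fin m') (Fin m') ℝ}
    (hA : A.PosSemidef) (hAd : A.det ≠ 0) (hB : B.PosSemidef) :
    B.det ≤ A.det * Real.exp ((A⁻¹ * B).trace - m') := by
  have hAinv : (A⁻¹).PosSemidef := hA.inv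
  set R := CFC.sqrt (A⁻¹) with hR
  have hRps : R.PosSemidef := (CFC.sqrt_nonneg _).posSemidef
  have hRR : R * R = A⁻¹ := CFC.sqrt_mul_sqrt_self _ hAinv.nonneg
  set C := R * B * R with hCdef
  have hC : C.PosSemidef := by
    have := hB.mul_mul_conjTranspose_same R
    rwa [hRps.1.eq] at this
  have hdetC : C.det = A⁻¹.det * B.det := by
    rw [hCdef, Matrix.det_mul, Matrix.det_mul, ← hRR, Matrix.det_mul]
    ring
  have htrC : C.trace = (A⁻¹ * B).trace := by
    rw [hCdef, Matrix.trace_mul_cycle, hRR]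
  have hdetApos : 0 < A.det := lt_of_le_of_ne (KW.posSemidef_det_nonneg hA) (Ne.symm hAd)
  have h := KW.det_le_exp_trace hC
  rw [hdetC, htrC, Matrix.det_nonsing_inv] at h
  have := mul_le_mul_of_nonneg_left h (le_of_lt hdetApos)
  rw [← mul_assoc, Ring.inverse_eq_inv', mul_inv_cancel₀ hAd, one_mul] at this
  exact this

/-- Bernoulli-based gap lemma replacing the derivative argument. -/
lemma KW.exists_gap {m' : ℕ} (hm : 2 ≤ m') {v : ℝ} (hv : (m' : ℝ) < v) :
    ∃ t : ℝ, 0 < t ∧ t < 1 ∧ 1 < (1 - t) ^ (m' - 1) * (1 - t + t * v) := by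
  have hm1 : (1 : ℝ) ≤ (m' : ℝ) - 1 := by
    have : (2:ℝ) ≤ (m':ℝ) := by exact_mod_cast hm
    linarith
  set k : ℕ := m' - 1 with hk
  have hkc : (k : ℝ) = (m' : ℝ) - 1 := by
    have h1 : (1:ℕ) ≤ m' := by omega
    push_cast [hk, h1]
    ring
  have hv1 : (1:ℝ) < v := by linarith
  set t : ℝ := (v - m') / (2 * ((m':ℝ) - 1) * (v - 1)) with ht
  have hden : 0 < 2 * ((m':ℝ) - 1) * (v - 1) := by nlinarith
  have ht0 : 0 < t := div_pos (by linarith) hden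
  have ht1 : t < 1 := by
    rw [ht, div_lt_one hden]
    nlinarith
  refine ⟨t, ht0, ht1, ?_⟩
  have hbern : 1 - (k:ℝ) * t ≤ (1 - t) ^ k := by
    have := one_add_mul_le_pow (a := -t) (by linarith) k
    simpa [sub_eq_add_neg, mul_comm] using this
  have hpos2 : 0 < 1 - t + t * v := by nlinarith
  have key : (1 - (k:ℝ) * t) * (1 - t + t * v) ≤ (1 - t) ^ k * (1 - t + t * v) :=
    mul_le_mul_of_nonneg_right hbern (le_of_lt hpos2)
  have expand : 1 < (1 - (k:ℝ) * t) * (1 - t + t * v) := by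
    rw [hkc]
    have htval : ((m':ℝ) - 1) * (v - 1) * t = (v - m') / 2 := by
      rw [ht, mul_div_assoc', div_eq_div_iff hden.ne' two_ne_zero]; ring
    nlinarith [mul_pos ht0 (show (0:ℝ) < v - (m':ℝ) by linarith)]
  linarith

lemma KW.smul_inv {m' : ℕ} (M : Matrix (Fin m') (Fin m') ℝ) {c : ℝ} (hc : c ≠ 0)
    (hM : IsUnit M.det) : (c • M)⁻¹ = c⁻¹ • M⁻¹ := by
  apply Matrix.inv_eq_right_inv
  rw [Matrix.smul_mul, Matrix.mul_smul, smul_smul, Matrix.mul_nonsing_inv _ hM,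
    mul_inv_cancel₀ hc, one_smul]

/-- Matrix determinant lemma for a scaled rank-one update. -/
lemma KW.det_add_smul_vecMulVec {m' : ℕ} {A : Matrix (Fin m') (Fin m') ℝ} (c : ℝ)
    (u : Fin m' → ℝ) (hA : IsUnit A.det) :
    (A + c • vecMulVec u u).det = A.det * (1 + c * (u ⬝ᵥ A⁻¹ *ᵥ u)) := by
  have h1 : c • vecMulVec u u = replicateCol Unit (c • u) * replicateRow Unit u := by
    rw [← vecMulVec_eq]
    ext i j
    simp [vecMulVec_apply]
    ring
  rw [h1, Matrix.det_add_replicateCol_mul_replicateRow hA]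
  congr 1
  rw [Matrix.det_unique]
  rw [Matrix.mul_assoc, ← Matrix.replicateCol_mulVec, Matrix.add_apply, Matrix.one_apply_eq,
    Matrix.replicateRow_mul_replicateCol_apply]
  rw [Matrix.mulVec_smul, dotProduct_smul]
  rw [Matrix.dotProduct_mulVec]
  simp [mul_comm]

/-- Trace of `A * M(w')` as a weighted sum of quadratic forms. -/
lemma KW.trace_mul_infoMatrix {N m : ℕ} (f : Fin N → Fin m → ℝ)
    (A : Matrix (Fin m) (Fin m) ℝ) (w' : Fin N → ℝ) :
    (A * infoMatrix f w').trace = ∑ i, w' i * (f i ⬝ᵥ A *ᵥ f i) := by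
  unfold infoMatrix
  rw [Finset.mul_sum, Matrix.trace_sum]
  apply Finset.sum_congr rfl
  intro i _
  rw [Matrix.mul_smul, Matrix.trace_smul, KW.trace_mul_vecMulVec]
  simp

/-- The weighted average of the variance function is `m`. -/
lemma KW.sum_w_varfun {N m : ℕ} (f : Fin N → Fin m → ℝ) {w : Fin N → ℝ}
    (hdet : (infoMatrix f w).det ≠ 0) :
    ∑ i, w i * varfun f w i = m := by
  have h := KW.trace_mul_infoMatrix f (infoMatrix f w)⁻¹ w
  rw [Matrix.nonsing_inv_mul _ (isUnit_iff_ne_zero.2 hdet), Matrix.trace_one] at h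
  simp only [varfun]
  rw [← h]
  simp

/-- Equality in weighted averages forces equality on the support. -/
lemma KW.eq_on_support {N : ℕ} {w v : Fin N → ℝ} {c : ℝ}
    (hw : ∀ i, 0 ≤ w i) (hsw : ∑ i, w i = 1) (hv : ∀ i, v i ≤ c)
    (heq : ∑ i, w i * v i = c) : ∀ ℓ, 0 < w ℓ → v ℓ = c := by
  intro ℓ hℓ
  have hzero : ∑ i, w i * (c - v i) = 0 := by
    have : ∑ i, w i * (c - v i) = c * (∑ i, w i) - ∑ i, w i * v i := by
      rw [Finset.mul_sum, ← Finset.sum_sub_distrib]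
      exact Finset.sum_congr rfl fun i _ => by ring
    rw [this, hsw, heq]; ring
  have hterm : ∀ i ∈ Finset.univ, (0:ℝ) ≤ w i * (c - v i) :=
    fun i _ => mul_nonneg (hw i) (by linarith [hv i])
  have := (Finset.sum_eq_zero_iff_of_nonneg hterm).1 hzero ℓ (Finset.mem_univ ℓ)
  have hcv : c - v ℓ = 0 := by
    rcases mul_eq_zero.1 this with h | h
    · exact absurd h (ne_of_gt hℓ)
    · exact h
  linarith

/-- Decomposition of the information matrix of a convex combination with a Dirac design. -/
lemma KW.infoMatrix_mix {N m : ℕ} (f : Fin N → Fin m → ℝ) (w : Fin N → ℝ) (t : ℝ) (j : Fin N) :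
    infoMatrix f (fun i => (1 - t) * w i + t * (if i = j then 1 else 0)) =
      (1 - t) • infoMatrix f w + t • vecMulVec (f j) (f j) := by
  unfold infoMatrix
  have key : ∀ i : Fin N, ((1 - t) * w i + t * (if i = j then 1 else 0)) • vecMulVec (f i) (f i)
      = (1 - t) • (w i • vecMulVec (f i) (f i))
        + (if i = j then t • vecMulVec (f i) (f i) else 0) := by
    intro i
    by_cases h : i = j <;> simp [h, add_smul, mul_smul]
  rw [Finset.sum_congr rfl (fun i _ => key i), Finset.sum_add_distrib, ← Finset.smul_sum,
    Finset.sum_ite_eq' Finset.univ j (fun i => t • vecMulVec (f i) (f i))]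
  simp

end Aux

section Main

variable {m N : ℕ}

lemma KW.varfun_le_of_optimal (hm : 2 ≤ m) (f : Fin N → Fin m → ℝ) {w : Fin N → ℝ}
    (hw : IsDesign w) (hdet : (infoMatrix f w).det ≠ 0) (hopt : IsDOptimalApprox f w) :
    ∀ j, varfun f w j ≤ m := by
  intro j
  by_contra hcon
  push_neg at hcon
  set v := varfun f w j with hv
  obtain ⟨t, ht0, ht1, hgap⟩ := KW.exists_gap hm hcon
  set M := infoMatrix f w with hM
  set w' := fun i => (1 - t) * w i + t * (if i = j then 1 else 0) with hw'def
  have hw' : IsDesign w' := by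
    constructor
    · intro i
      apply add_nonneg (mul_nonneg (by linarith) (hw.1 i))
      apply mul_nonneg (le_of_lt ht0)
      split <;> norm_num
    · rw [hw'def]
      simp only
      rw [Finset.sum_add_distrib, ← Finset.mul_sum, ← Finset.mul_sum, hw.2,
        Finset.sum_ite_eq' Finset.univ j (fun _ => (1:ℝ))]
      simp
  have hmix : infoMatrix f w' = (1 - t) • M + t • vecMulVec (f j) (f j) :=
    KW.infoMatrix_mix f w t j
  have hs : (1:ℝ) - t ≠ 0 := by linarith
  have hdetA : ((1 - t) • M).det = (1 - t) ^ m * M.det := by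
    rw [Matrix.det_smul]; simp [Fintype.card_fin]
  have hAunit : IsUnit ((1 - t) • M).det := by
    rw [hdetA]
    exact isUnit_iff_ne_zero.2 (mul_ne_zero (pow_ne_zero _ hs) hdet)
  have hMunit : IsUnit M.det := isUnit_iff_ne_zero.2 hdet
  have hquad : f j ⬝ᵥ ((1 - t) • M)⁻¹ *ᵥ f j = (1 - t)⁻¹ * v := by
    rw [KW.smul_inv M hs hMunit, Matrix.smul_mulVec, dotProduct_smul]
    rfl
  have hdet' : (infoMatrix f w').det = M.det * ((1 - t) ^ (m - 1) * (1 - t + t * v)) := by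
    rw [hmix, KW.det_add_smul_vecMulVec t (f j) hAunit, hquad, hdetA]
    have hpow : (1 - t) ^ m = (1 - t) ^ (m - 1) * (1 - t) := by
      rw [← pow_succ]
      congr 1
      omega
    rw [hpow]
    field_simp
  have hMpos : 0 < M.det :=
    lt_of_le_of_ne (KW.posSemidef_det_nonneg (KW.infoMatrix_posSemidef f hw.1)) (Ne.symm hdet)
  have hlt : M.det < (infoMatrix f w').det := by
    rw [hdet']
    exact lt_mul_of_one_lt_right hMpos hgap
  have hexp : 0 < (1:ℝ) / (m:ℝ) := by
    have : (0:ℝ) < (m:ℝ) := by exact_mod_cast (by omega : 0 < m)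
    positivity
  have : Dcrit M < Dcrit (infoMatrix f w') :=
    Real.rpow_lt_rpow (le_of_lt hMpos) hlt hexp
  exact absurd (hopt.2 w' hw') (not_le.2 this)

theorem equivalence_theorem' (hm : 2 ≤ m) (hN : 2 ≤ N) (f : Fin N → Fin m → ℝ)
    (hns : ∃ w : Fin N → ℝ, IsDesign w ∧ (infoMatrix f w).det ≠ 0) :
    (∀ w : Fin N → ℝ, IsDesign w → (infoMatrix f w).det ≠ 0 →
      (IsDOptimalApprox f w ↔ (⨆ i, varfun f w i) = (m : ℝ))) ∧
    (∀ wopt w : Fin N → ℝ, IsDOptimalApprox f wopt → IsDOptimalApprox f w →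
      ∀ ℓ : Fin N, 0 < w ℓ → varfun f wopt ℓ = (m : ℝ)) := by
  haveI : Nonempty (Fin N) := ⟨⟨0, by omega⟩⟩
  have hmR : (0:ℝ) < (m:ℝ) := by exact_mod_cast (by omega : 0 < m)
  have hexp : 0 < (1:ℝ) / (m:ℝ) := by positivity
  have hbdd : ∀ w : Fin N → ℝ, BddAbove (Set.range (varfun f w)) :=
    fun w => Set.Finite.bddAbove (Set.finite_range _)
  have hex_pos : ∀ w : Fin N → ℝ, IsDesign w → ∃ i, 0 < w i := by
    intro w hw
    by_contra hcon
    push_neg at hcon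
    have : ∀ i ∈ Finset.univ, w i = 0 := fun i _ => le_antisymm (hcon i) (hw.1 i)
    have := Finset.sum_eq_zero this
    rw [hw.2] at this
    norm_num at this
  -- sum of weighted varfun under another design
  have htr_sum : ∀ w w' : Fin N → ℝ,
      ((infoMatrix f w)⁻¹ * infoMatrix f w').trace = ∑ i, w' i * varfun f w i :=
    fun w w' => KW.trace_mul_infoMatrix f (infoMatrix f w)⁻¹ w'
  -- the D-criterion comparison from the concavity bound
  have hkey : ∀ w w' : Fin N → ℝ, IsDesign w → (infoMatrix f w).det ≠ 0 → IsDesign w' →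
      (∀ i, varfun f w i ≤ m) → Dcrit (infoMatrix f w') ≤ Dcrit (infoMatrix f w) := by
    intro w w' hw hdet hw' hle
    have hpsd := KW.infoMatrix_posSemidef f hw.1
    have hpsd' := KW.infoMatrix_posSemidef f hw'.1
    have hconc := KW.det_le_det_mul_exp hpsd hdet hpsd'
    rw [htr_sum w w'] at hconc
    have hSle : ∑ i, w' i * varfun f w i ≤ m := by
      calc ∑ i, w' i * varfun f w i ≤ ∑ i, w' i * m :=
            Finset.sum_le_sum fun i _ => mul_le_mul_of_nonneg_left (hle i) (hw'.1 i)
        _ = m := by rw [← Finset.sum_mul, hw'.2, one_mul]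
    have hdetle : (infoMatrix f w').det ≤ (infoMatrix f w).det := by
      have he : Real.exp (∑ i, w' i * varfun f w i - m) ≤ 1 :=
        Real.exp_le_one_iff.2 (by linarith)
      have hMpos : 0 < (infoMatrix f w).det :=
        lt_of_le_of_ne (KW.posSemidef_det_nonneg hpsd) (Ne.symm hdet)
      calc (infoMatrix f w').det
          ≤ (infoMatrix f w).det * Real.exp (∑ i, w' i * varfun f w i - m) := hconc
        _ ≤ (infoMatrix f w).det * 1 := by
            exact mul_le_mul_of_nonneg_left he (le_of_lt hMpos)
        _ = (infoMatrix f w).det := mul_one _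
    exact Real.rpow_le_rpow (KW.posSemidef_det_nonneg hpsd') hdetle (le_of_lt hexp)
  constructor
  · intro w hw hdet
    constructor
    · intro hopt
      have hle := KW.varfun_le_of_optimal hm f hw hdet hopt
      have hsum := KW.sum_w_varfun f hdet
      obtain ⟨i0, hi0⟩ := hex_pos w hw
      have hvi0 : varfun f w i0 = m := KW.eq_on_support hw.1 hw.2 hle hsum i0 hi0
      apply le_antisymm (ciSup_le hle)
      calc (m:ℝ) = varfun f w i0 := hvi0.symm
        _ ≤ ⨆ i, varfun f w i := le_ciSup (hbdd w) i0
    · intro hsup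
      have hle : ∀ i, varfun f w i ≤ m := by
        intro i
        have := le_ciSup (hbdd w) i
        rw [hsup] at this
        exact this
      exact ⟨hw, fun w' hw' => hkey w w' hw hdet hw' hle⟩
  · intro wopt w hopt hwo ℓ hℓ
    obtain ⟨wns, hwns, hwnsdet⟩ := hns
    have hnspos : 0 < (infoMatrix f wns).det :=
      lt_of_le_of_ne (KW.posSemidef_det_nonneg (KW.infoMatrix_posSemidef f hwns.1))
        (Ne.symm hwnsdet)
    have hDns : 0 < Dcrit (infoMatrix f wns) := Real.rpow_pos_of_pos hnspos _
    have hdet_ne : ∀ u : Fin N → ℝ, IsDOptimalApprox f u → (infoMatrix f u).det ≠ 0 := by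
      intro u hu h0
      have : 0 < Dcrit (infoMatrix f u) := lt_of_lt_of_le hDns (hu.2 wns hwns)
      rw [Dcrit, h0, Real.zero_rpow (by positivity)] at this
      exact lt_irrefl _ this
    have hdetopt := hdet_ne wopt hopt
    have hdetw := hdet_ne w hwo
    have hdoptpos : 0 < (infoMatrix f wopt).det :=
      lt_of_le_of_ne (KW.posSemidef_det_nonneg (KW.infoMatrix_posSemidef f hopt.1.1))
        (Ne.symm hdetopt)
    -- determinants of two optimal designs agree
    have hDeq : Dcrit (infoMatrix f w) = Dcrit (infoMatrix f wopt) :=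
      le_antisymm (hopt.2 w hwo.1) (hwo.2 wopt hopt.1)
    have hdeteq : (infoMatrix f w).det = (infoMatrix f wopt).det := by
      have h1 := KW.posSemidef_det_nonneg (KW.infoMatrix_posSemidef f hwo.1.1)
      have h2 := KW.posSemidef_det_nonneg (KW.infoMatrix_posSemidef f hopt.1.1)
      have hm0 : m ≠ 0 := by omega
      have := congrArg (fun x : ℝ => x ^ (m:ℕ)) hDeq
      simpa [Dcrit, one_div, Real.rpow_inv_natCast_pow h1 hm0,
        Real.rpow_inv_natCast_pow h2 hm0] using this
    have hle : ∀ i, varfun f wopt i ≤ m :=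
      KW.varfun_le_of_optimal hm f hopt.1 hdetopt hopt
    -- the weighted average of varfun f wopt under w equals m
    have hconc := KW.det_le_det_mul_exp (KW.infoMatrix_posSemidef f hopt.1.1) hdetopt
      (KW.infoMatrix_posSemidef f hwo.1.1)
    rw [htr_sum wopt w, hdeteq] at hconc
    have hSge : (m:ℝ) ≤ ∑ i, w i * varfun f wopt i := by
      by_contra hS
      push_neg at hS
      have : Real.exp (∑ i, w i * varfun f wopt i - m) < 1 :=
        Real.exp_lt_one_iff.2 (by linarith)
      nlinarith
    have hSle : ∑ i, w i * varfun f wopt i ≤ m := by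
      calc ∑ i, w i * varfun f wopt i ≤ ∑ i, w i * m :=
            Finset.sum_le_sum fun i _ => mul_le_mul_of_nonneg_left (hle i) (hwo.1.1 i)
        _ = m := by rw [← Finset.sum_mul, hwo.1.2, one_mul]
    exact KW.eq_on_support hwo.1.1 hwo.1.2 hle (le_antisymm hSle hSge) ℓ hℓ

end Main

theorem equivalence_theorem {m N : ℕ} (hm : 2 ≤ m) (hN : 2 ≤ N) (f : Fin N → Fin m → ℝ)
    (hns : ∃ w : Fin N → ℝ, IsDesign w ∧ (infoMatrix f w).det ≠ 0) :
    (∀ w : Fin N → ℝ, IsDesign w → (infoMatrix f w).det ≠ 0 →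
      (IsDOptimalApprox f w ↔ (⨆ i, varfun f w i) = (m : ℝ))) ∧
    (∀ wopt w : Fin N → ℝ, IsDOptimalApprox f wopt → IsDOptimalApprox f w →
      ∀ ℓ : Fin N, 0 < w ℓ → varfun f wopt ℓ = (m : ℝ)) :=
  equivalence_theorem' hm hN f hns
end

section
/- (Spectral norm of a rank-two symmetric update.) Let m ≥ 1 and v, z ∈ ℝ^m with ‖v‖ ≥ ‖z‖. Then the operator 2-norm (spectral norm) of the symmetric matrix vvᵀ − zzᵀ equals Δ(v,z). -/
set_option maxHeartbeats 1000000

open Matrix BigOperators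

section aux
variable {F : Type*} [NormedAddCommGroup F] [InnerProductSpace ℝ F]

local notation "⟪" x ", " y "⟫" => @inner ℝ _ _ x y

lemma sym_norm_le (T : F →L[ℝ] F) (hsym : ∀ x y : F, ⟪T x, y⟫ = ⟪x, T y⟫)
    {c : ℝ} (hc : 0 ≤ c) (h : ∀ x : F, |⟪T x, x⟫| ≤ c * ‖x‖ ^ 2) : ‖T‖ ≤ c := by
  refine T.opNorm_le_bound hc fun x => ?_
  rcases eq_or_ne (T x) 0 with h0 | h0
  · rw [h0, norm_zero]; positivity
  have hx : x ≠ 0 := by rintro rfl; simp at h0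
  have hxpos : (0:ℝ) < ‖x‖ := norm_pos_iff.mpr hx
  have hTpos : (0:ℝ) < ‖T x‖ := norm_pos_iff.mpr h0
  set y : F := (‖x‖ / ‖T x‖) • T x with hy
  have hyn : ‖y‖ = ‖x‖ := by
    rw [hy, norm_smul, Real.norm_eq_abs, abs_div, abs_of_nonneg (norm_nonneg _),
      abs_of_nonneg (norm_nonneg _)]
    field_simp
  have h1 : ⟪T x, y⟫ = ‖x‖ * ‖T x‖ := by
    rw [hy, real_inner_smul_right, real_inner_self_eq_norm_sq]
    field_simp
  have h2 : ⟪T y, x⟫ = ⟪T x, y⟫ := by rw [hsym y x, real_inner_comm]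
  have key : 4 * ⟪T x, y⟫ = ⟪T (x + y), x + y⟫ - ⟪T (x - y), x - y⟫ := by
    simp only [map_add, map_sub, inner_add_left, inner_add_right, inner_sub_left,
      inner_sub_right]
    linarith [h2]
  have hpar : ‖x + y‖ ^ 2 + ‖x - y‖ ^ 2 = 2 * (‖x‖ ^ 2 + ‖y‖ ^ 2) := by
    have := parallelogram_law_with_norm ℝ x y
    nlinarith [this]
  have hb : 4 * (‖x‖ * ‖T x‖) ≤ c * (4 * ‖x‖ ^ 2) := by
    have b1 := h (x + y)
    have b2 := h (x - y)
    have := abs_le.mp b1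
    have := abs_le.mp b2
    rw [← h1, key]
    have e1 : ⟪T (x+y), x+y⟫ ≤ c * ‖x+y‖^2 := (abs_le.mp b1).2
    have e2 : -(c * ‖x-y‖^2) ≤ ⟪T (x-y), x-y⟫ := (abs_le.mp b2).1
    have : c * ‖x+y‖^2 + c * ‖x-y‖^2 = c * (4 * ‖x‖^2) := by
      rw [← mul_add, hpar, hyn]; ring
    linarith
  have : ‖x‖ * ‖T x‖ ≤ c * ‖x‖ ^ 2 := by linarith
  rw [← mul_le_mul_iff_right₀ hxpos]
  calc ‖x‖ * ‖T x‖ ≤ c * ‖x‖ ^ 2 := this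
    _ = ‖x‖ * (c * ‖x‖) := by ring

lemma rank_two_norm (a b : F) (hab : 0 ≤ ⟪a, b⟫) (T : F →L[ℝ] F)
    (hT : ∀ x, T x = (1/2 : ℝ) • (⟪a, x⟫ • b + ⟪b, x⟫ • a)) :
    ‖T‖ = (‖a‖ * ‖b‖ + ⟪a, b⟫) / 2 := by
  set lam : ℝ := (‖a‖ * ‖b‖ + ⟪a, b⟫) / 2 with hlam
  have hCS : ⟪a, b⟫ ≤ ‖a‖ * ‖b‖ := real_inner_le_norm a b
  have hlam_nonneg : 0 ≤ lam := by positivity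
  have hinner : ∀ x : F, ⟪T x, x⟫ = ⟪a, x⟫ * ⟪b, x⟫ := by
    intro x
    rw [hT x, real_inner_smul_left, inner_add_left, real_inner_smul_left,
      real_inner_smul_left]
    ring
  have hsym : ∀ x y : F, ⟪T x, y⟫ = ⟪x, T y⟫ := by
    intro x y
    rw [hT x, hT y, real_inner_smul_left, real_inner_smul_right, inner_add_left,
      inner_add_right, real_inner_smul_left, real_inner_smul_left,
      real_inner_smul_right, real_inner_smul_right, real_inner_comm x b, real_inner_comm x a]
    ring
  rcases eq_or_ne a 0 with ha | ha
  · have hT0 : T = 0 := by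
      ext x; rw [hT x]; simp [ha]
    rw [hT0, hlam, ha]; simp
  rcases eq_or_ne b 0 with hb | hb
  · have hT0 : T = 0 := by
      ext x; rw [hT x]; simp [hb]
    rw [hT0, hlam, hb]; simp
  have hapos : (0:ℝ) < ‖a‖ := norm_pos_iff.mpr ha
  have hbpos : (0:ℝ) < ‖b‖ := norm_pos_iff.mpr hb
  -- upper bound
  have hupper : ‖T‖ ≤ lam := by
    apply sym_norm_le T hsym hlam_nonneg
    intro x
    set t : ℝ := Real.sqrt (‖b‖ / ‖a‖) with ht
    have htpos : 0 < t := Real.sqrt_pos.mpr (by positivity)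
    have ht2 : t ^ 2 = ‖b‖ / ‖a‖ := Real.sq_sqrt (by positivity)
    set u : F := t • a + t⁻¹ • b with hu
    set w : F := t • a - t⁻¹ • b with hw
    have hta : t ^ 2 * ‖a‖ ^ 2 = ‖a‖ * ‖b‖ := by
      rw [ht2]; field_simp
    have htb : t⁻¹ ^ 2 * ‖b‖ ^ 2 = ‖a‖ * ‖b‖ := by
      rw [inv_pow, ht2]; field_simp
    have hun : ‖u‖ ^ 2 = 4 * lam := by
      rw [hu, norm_add_sq_real, norm_smul, norm_smul, real_inner_smul_left,
        real_inner_smul_right, Real.norm_eq_abs, Real.norm_eq_abs,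
        abs_of_pos htpos, abs_of_pos (inv_pos.mpr htpos), mul_pow, mul_pow]
      have : t * (t⁻¹ * ⟪a, b⟫) = ⟪a, b⟫ := by field_simp
      rw [this, hlam]
      nlinarith [hta, htb]
    have hwn : ‖w‖ ^ 2 = 2 * (‖a‖ * ‖b‖) - 2 * ⟪a, b⟫ := by
      rw [hw, norm_sub_sq_real, norm_smul, norm_smul, real_inner_smul_left,
        real_inner_smul_right, Real.norm_eq_abs, Real.norm_eq_abs,
        abs_of_pos htpos, abs_of_pos (inv_pos.mpr htpos), mul_pow, mul_pow]
      have : t * (t⁻¹ * ⟪a, b⟫) = ⟪a, b⟫ := by field_simp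
      rw [this]
      nlinarith [hta, htb]
    have hux : ⟪u, x⟫ = t * ⟪a, x⟫ + t⁻¹ * ⟪b, x⟫ := by
      rw [hu, inner_add_left, real_inner_smul_left, real_inner_smul_left]
    have hwx : ⟪w, x⟫ = t * ⟪a, x⟫ - t⁻¹ * ⟪b, x⟫ := by
      rw [hw, inner_sub_left, real_inner_smul_left, real_inner_smul_left]
    have hprod : 4 * (⟪a, x⟫ * ⟪b, x⟫) = ⟪u, x⟫ ^ 2 - ⟪w, x⟫ ^ 2 := by
      rw [hux, hwx]
      have h1 : t * t⁻¹ = 1 := by field_simp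
      have h2 : (t * ⟪a,x⟫ + t⁻¹ * ⟪b,x⟫) ^ 2 - (t * ⟪a,x⟫ - t⁻¹ * ⟪b,x⟫) ^ 2
          = 4 * (t * t⁻¹) * (⟪a,x⟫ * ⟪b,x⟫) := by ring
      rw [h2, h1]; ring
    have cs_u : ⟪u, x⟫ ^ 2 ≤ ‖u‖ ^ 2 * ‖x‖ ^ 2 := by
      have := real_inner_mul_inner_self_le u x
      rw [real_inner_self_eq_norm_sq, real_inner_self_eq_norm_sq] at this
      nlinarith [this]
    have cs_w : ⟪w, x⟫ ^ 2 ≤ ‖w‖ ^ 2 * ‖x‖ ^ 2 := by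
      have := real_inner_mul_inner_self_le w x
      rw [real_inner_self_eq_norm_sq, real_inner_self_eq_norm_sq] at this
      nlinarith [this]
    have hwle : ‖w‖ ^ 2 ≤ 4 * lam := by rw [hwn, hlam]; linarith
    rw [hinner x, abs_le]
    constructor
    · nlinarith [cs_w, hwle, sq_nonneg ‖x‖, sq_nonneg ⟪u, x⟫]
    · nlinarith [cs_u, hun, sq_nonneg ‖x‖, sq_nonneg ⟪w, x⟫]
  -- lower bound
  have hlower : lam ≤ ‖T‖ := by
    set x0 : F := ‖b‖ • a + ‖a‖ • b with hx0
    have hax0 : ⟪a, x0⟫ = 2 * lam * ‖a‖ := by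
      rw [hx0, inner_add_right, real_inner_smul_right, real_inner_smul_right,
        real_inner_self_eq_norm_sq, hlam]
      ring
    have hbx0 : ⟪b, x0⟫ = 2 * lam * ‖b‖ := by
      rw [hx0, inner_add_right, real_inner_smul_right, real_inner_smul_right,
        real_inner_self_eq_norm_sq, real_inner_comm a b, hlam]
      ring
    have hTx0 : T x0 = lam • x0 := by
      rw [hT x0, hax0, hbx0, hx0]
      module
    have hx0norm : ‖x0‖ ^ 2 = 4 * (‖a‖ * ‖b‖) * lam := by
      rw [hx0, norm_add_sq_real, norm_smul, norm_smul, real_inner_smul_left,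
        real_inner_smul_right, Real.norm_eq_abs, Real.norm_eq_abs,
        abs_of_pos hapos, abs_of_pos hbpos, mul_pow, mul_pow, hlam]
      ring
    have hlampos : 0 < lam := by rw [hlam]; nlinarith
    have hx0ne : x0 ≠ 0 := by
      intro h
      rw [h, norm_zero] at hx0norm
      nlinarith
    have hx0pos : 0 < ‖x0‖ := norm_pos_iff.mpr hx0ne
    have := T.le_opNorm x0
    rw [hTx0, norm_smul, Real.norm_eq_abs, abs_of_pos hlampos] at this
    exact le_of_mul_le_mul_right (by linarith [this]) hx0pos
  linarith

end aux

open Matrix BigOperators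

/-- The Euclidean norm of a vector in `ℝ^m`. -/
noncomputable def eucNorm {m : ℕ} (v : Fin m → ℝ) : ℝ :=
  Real.sqrt (∑ i, v i ^ 2)

/-- The discrepancy `Δ(v,z) = (‖v+z‖‖v−z‖ + ‖v‖² − ‖z‖²)/2` (Euclidean norms). -/
noncomputable def disc {m : ℕ} (v z : Fin m → ℝ) : ℝ :=
  (eucNorm (v + z) * eucNorm (v - z) + eucNorm v ^ 2 - eucNorm z ^ 2) / 2

theorem spectral_norm_rank_two_update {m : ℕ} (hm : 1 ≤ m) (v z : Fin m → ℝ)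
    (hvz : eucNorm z ≤ eucNorm v) :
    ‖Matrix.toEuclideanCLM (𝕜 := ℝ) (vecMulVec v v - vecMulVec z z)‖ = disc v z := by
  set a : EuclideanSpace ℝ (Fin m) := (WithLp.equiv 2 (Fin m → ℝ)).symm (v + z) with ha
  set b : EuclideanSpace ℝ (Fin m) := (WithLp.equiv 2 (Fin m → ℝ)).symm (v - z) with hb
  set T := Matrix.toEuclideanCLM (𝕜 := ℝ) (vecMulVec v v - vecMulVec z z) with hTdef
  have hai : ∀ i, a i = v i + z i := fun i => rfl
  have hbi : ∀ i, b i = v i - z i := fun i => rfl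
  have hinn : ∀ (c : EuclideanSpace ℝ (Fin m)) (x : EuclideanSpace ℝ (Fin m)),
      (inner ℝ c x : ℝ) = ∑ i, c i * x i := by
    intro c x
    rw [PiLp.inner_apply]
    simp [RCLike.inner_apply, conj_trivial, mul_comm]
  have hT : ∀ x : EuclideanSpace ℝ (Fin m),
      T x = (1/2 : ℝ) • ((inner ℝ a x : ℝ) • b + (inner ℝ b x : ℝ) • a) := by
    intro x
    apply (WithLp.equiv 2 (Fin m → ℝ)).injective
    funext i
    have hL : (WithLp.equiv 2 (Fin m → ℝ)) (T x) i
        = ∑ j, (v i * v j - z i * z j) * x j := by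
      rw [hTdef]; change ((vecMulVec v v - vecMulVec z z) *ᵥ WithLp.ofLp x) i = _
      simp only [Matrix.mulVec, dotProduct, Matrix.sub_apply, Matrix.vecMulVec_apply]
    rw [hL]
    have hR : (WithLp.equiv 2 (Fin m → ℝ))
        ((1/2 : ℝ) • ((inner ℝ a x : ℝ) • b + (inner ℝ b x : ℝ) • a)) i
        = (1/2 : ℝ) * ((inner ℝ a x : ℝ) * b i + (inner ℝ b x : ℝ) * a i) := rfl
    rw [hR, hinn a x, hinn b x, hai i, hbi i]
    simp only [hai, hbi]
    rw [Finset.sum_mul, Finset.sum_mul, ← Finset.sum_add_distrib, Finset.mul_sum]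
    apply Finset.sum_congr rfl
    intro j _
    ring
  have hnorm : ∀ w : Fin m → ℝ, eucNorm w = ‖(WithLp.equiv 2 (Fin m → ℝ)).symm w‖ := by
    intro w
    rw [EuclideanSpace.norm_eq, eucNorm]
    congr 1
    apply Finset.sum_congr rfl
    intro i _
    rw [Real.norm_eq_abs, sq_abs]
    rfl
  have hsq : ∀ w : Fin m → ℝ, eucNorm w ^ 2 = ∑ i, w i ^ 2 := by
    intro w
    rw [eucNorm, Real.sq_sqrt (Finset.sum_nonneg fun i _ => sq_nonneg _)]
  have habinner : (inner ℝ a b : ℝ) = eucNorm v ^ 2 - eucNorm z ^ 2 := by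
    rw [hinn a b, hsq, hsq, ← Finset.sum_sub_distrib]
    apply Finset.sum_congr rfl
    intro i _
    rw [hai, hbi]
    ring
  have hab : 0 ≤ (inner ℝ a b : ℝ) := by
    rw [habinner]
    have h0 : 0 ≤ eucNorm z := Real.sqrt_nonneg _
    nlinarith [hvz]
  have := rank_two_norm a b hab T hT
  rw [this, habinner, disc, ← hnorm (v + z), ← hnorm (v - z)]
  ring
end

section
/- (Extreme eigenvalues of vvᵀ − zzᵀ.) Let m ≥ 2 and v, z ∈ ℝ^m. Then the largest eigenvalue of the symmetric matrix vvᵀ − zzᵀ equals Δ(v,z) and its smallest eigenvalue equals −Δ(z,v). -/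
set_option maxHeartbeats 1000000

open Matrix BigOperators

lemma quad_of_eig {m : ℕ} (v z x : Fin m → ℝ) (μ : ℝ) (hx : x ≠ 0)
    (h : (vecMulVec v v - vecMulVec z z) *ᵥ x = μ • x) :
    μ = 0 ∨ μ^2 - ((∑ i, v i^2) - (∑ i, z i^2))*μ +
      ((∑ i, v i * z i)^2 - (∑ i, v i^2)*(∑ i, z i^2)) = 0 := by
  set a := ∑ i, v i^2 with ha
  set b := ∑ i, z i^2 with hb
  set c := ∑ i, v i * z i with hc
  set p := ∑ j, v j * x j with hp
  set q := ∑ j, z j * x j with hq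
  have hcoord : ∀ i, p * v i - q * z i = μ * x i := by
    intro i
    have := congrFun h i
    simp only [mulVec, dotProduct, Matrix.sub_apply, vecMulVec_apply, Pi.smul_apply,
      smul_eq_mul, sub_mul, Finset.sum_sub_distrib] at this
    rw [← this, hp, hq, Finset.sum_mul, Finset.sum_mul]
    congr 1 <;> apply Finset.sum_congr rfl <;> intros <;> ring
  have hv : μ * p = p * a - q * c := by
    have h0 : ∑ i, v i * (μ * x i) = ∑ i, v i * (p * v i - q * z i) :=
      Finset.sum_congr rfl fun i _ => by rw [hcoord i]
    calc μ * p = ∑ i, v i * (μ * x i) := by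
          rw [hp, Finset.mul_sum]; exact Finset.sum_congr rfl fun i _ => by ring
      _ = ∑ i, v i * (p * v i - q * z i) := h0
      _ = p * a - q * c := by
          rw [ha, hc, Finset.mul_sum, Finset.mul_sum, ← Finset.sum_sub_distrib]
          exact Finset.sum_congr rfl fun i _ => by ring
  have hz : μ * q = p * c - q * b := by
    have h0 : ∑ i, z i * (μ * x i) = ∑ i, z i * (p * v i - q * z i) :=
      Finset.sum_congr rfl fun i _ => by rw [hcoord i]
    calc μ * q = ∑ i, z i * (μ * x i) := by
          rw [hq, Finset.mul_sum]; exact Finset.sum_congr rfl fun i _ => by ring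
      _ = ∑ i, z i * (p * v i - q * z i) := h0
      _ = p * c - q * b := by
          rw [hb, hc, Finset.mul_sum, Finset.mul_sum, ← Finset.sum_sub_distrib]
          exact Finset.sum_congr rfl fun i _ => by ring
  by_cases hμ : μ = 0
  · exact Or.inl hμ
  right
  have hpq : p ≠ 0 ∨ q ≠ 0 := by
    by_contra hcon
    push_neg at hcon
    apply hx
    funext i
    have := hcoord i
    rw [hcon.1, hcon.2] at this
    simp at this
    rcases this with h' | h'
    · exact absurd h' hμ
    · exact h'
  rcases hpq with hp0 | hq0
  · have h1 : p * ((a - μ) * (b + μ)) = p * (c * c) := by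
      linear_combination (-(b+μ))*hv + c*hz
    have h2 : (a - μ) * (b + μ) = c * c := mul_left_cancel₀ hp0 h1
    linear_combination -h2
  · have h1 : q * ((a - μ) * (b + μ)) = q * (c * c) := by
      linear_combination (a-μ)*hz - c*hv
    have h2 : (a - μ) * (b + μ) = c * c := mul_left_cancel₀ hq0 h1
    linear_combination -h2

lemma trace_eq_sum_eig {m : ℕ} (A : Matrix (Fin m) (Fin m) ℝ) (hA : A.IsHermitian) :
    A.trace = ∑ i, hA.eigenvalues i := by
  have hU : (star (hA.eigenvectorUnitary : Matrix (Fin m) (Fin m) ℝ)) *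
      (hA.eigenvectorUnitary : Matrix (Fin m) (Fin m) ℝ) = 1 :=
    Matrix.mem_unitaryGroup_iff'.mp (hA.eigenvectorUnitary).2
  conv_lhs => rw [hA.spectral_theorem]
  rw [Unitary.conjStarAlgAut_apply, Matrix.trace_mul_cycle, hU, Matrix.one_mul, Matrix.trace_diagonal]
  simp

lemma trace_sq_eq_sum_eig_sq {m : ℕ} (A : Matrix (Fin m) (Fin m) ℝ) (hA : A.IsHermitian) :
    (A * A).trace = ∑ i, hA.eigenvalues i ^ 2 := by
  set U := (hA.eigenvectorUnitary : Matrix (Fin m) (Fin m) ℝ) with hUdef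
  set D := diagonal ((RCLike.ofReal : ℝ → ℝ) ∘ hA.eigenvalues) with hDdef
  have hU : star U * U = 1 := Matrix.mem_unitaryGroup_iff'.mp (hA.eigenvectorUnitary).2
  have key : A * A = U * (D * D) * star U := by
    conv_lhs => rw [hA.spectral_theorem]
    calc (U*D*star U)*(U*D*star U) = U*(D*((star U*U)*(D*star U))) := by
          simp only [Matrix.mul_assoc]
      _ = U*(D*D)*star U := by rw [hU, Matrix.one_mul]; simp only [Matrix.mul_assoc]
  rw [key, Matrix.trace_mul_cycle, hU, Matrix.one_mul, hDdef,
    Matrix.diagonal_mul_diagonal, Matrix.trace_diagonal]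
  simp [sq]

theorem extreme_eigenvalues_rank_two {m : ℕ} (hm : 2 ≤ m) (v z : Fin m → ℝ)
    (hC : (vecMulVec v v - vecMulVec z z).IsHermitian) :
    (⨆ i, hC.eigenvalues i) = disc v z ∧ (⨅ i, hC.eigenvalues i) = -disc z v := by
  haveI : Nonempty (Fin m) := Fin.pos_iff_nonempty.mp (lt_of_lt_of_le two_pos hm)
  set a := ∑ i, v i^2 with ha
  set b := ∑ i, z i^2 with hb
  set c := ∑ i, v i * z i with hc
  have ha0 : 0 ≤ a := Finset.sum_nonneg fun i _ => sq_nonneg _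
  have hb0 : 0 ≤ b := Finset.sum_nonneg fun i _ => sq_nonneg _
  have hcs : c^2 ≤ a * b := Finset.sum_mul_sq_le_sq_mul_sq Finset.univ v z
  have hdisc0 : 0 ≤ (a+b)^2 - 4*c^2 := by nlinarith [sq_nonneg (a-b)]
  set d := Real.sqrt ((a+b)^2 - 4*c^2) with hddef
  have hd0 : 0 ≤ d := Real.sqrt_nonneg _
  have hd2 : d^2 = (a+b)^2 - 4*c^2 := Real.sq_sqrt hdisc0
  have hdge : (a-b)^2 ≤ d^2 := by nlinarith
  have hL1 : 0 ≤ ((a-b)+d)/2 := by nlinarith [abs_le_abs (le_refl d)]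
  have hL2 : ((a-b)-d)/2 ≤ 0 := by nlinarith
  -- classification of eigenvalues
  have hclass : ∀ i, hC.eigenvalues i = 0 ∨ hC.eigenvalues i = ((a-b)+d)/2 ∨
      hC.eigenvalues i = ((a-b)-d)/2 := by
    intro i
    have hx : (⇑(hC.eigenvectorBasis i) : Fin m → ℝ) ≠ 0 := by
      intro h0
      exact hC.eigenvectorBasis.orthonormal.ne_zero i (by ext j; exact congrFun h0 j)
    rcases quad_of_eig v z _ _ hx (hC.mulVec_eigenvectorBasis i) with h | h
    · exact Or.inl h
    · right
      set μ := hC.eigenvalues i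
      have hfac : (μ - ((a-b)+d)/2) * (μ - ((a-b)-d)/2) = 0 := by
        rw [← ha, ← hb, ← hc] at h
        linear_combination h - hd2/4
      rcases mul_eq_zero.mp hfac with h' | h'
      · exact Or.inl (by linarith)
      · exact Or.inr (by linarith)
  have hub : ∀ i, hC.eigenvalues i ≤ ((a-b)+d)/2 := by
    intro i
    rcases hclass i with h | h | h <;> rw [h] <;> linarith
  have hlb : ∀ i, ((a-b)-d)/2 ≤ hC.eigenvalues i := by
    intro i
    rcases hclass i with h | h | h <;> rw [h] <;> linarith
  -- trace identities
  have hS : ∑ i, hC.eigenvalues i = a - b := by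
    rw [← trace_eq_sum_eig _ hC]
    simp only [Matrix.trace, Matrix.diag, Matrix.sub_apply, vecMulVec_apply,
      Finset.sum_sub_distrib]
    rw [ha, hb]
    congr 1 <;> exact Finset.sum_congr rfl fun i _ => (sq _).symm
  have hQ : ∑ i, hC.eigenvalues i ^ 2 = a^2 - 2*c^2 + b^2 := by
    rw [← trace_sq_eq_sum_eig_sq _ hC]
    have step2 : a*a - 2*(c*c) + b*b = ∑ i, ∑ j,
        ((v i * v j - z i * z j) * (v j * v i - z j * z i)) := by
      rw [ha, hb, hc, Finset.sum_mul_sum, Finset.sum_mul_sum, Finset.sum_mul_sum]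
      simp only [Finset.mul_sum]
      simp only [← Finset.sum_sub_distrib, ← Finset.sum_add_distrib]
      refine Finset.sum_congr rfl fun i _ => Finset.sum_congr rfl fun j _ => by ring
    calc ((vecMulVec v v - vecMulVec z z) * (vecMulVec v v - vecMulVec z z)).trace
        = ∑ i, ∑ j, ((v i * v j - z i * z j) * (v j * v i - z j * z i)) := by
          simp [Matrix.trace, Matrix.diag, Matrix.mul_apply, vecMulVec_apply]
      _ = a*a - 2*(c*c) + b*b := step2.symm
      _ = a^2 - 2*c^2 + b^2 := by ring
  -- existence of extreme eigenvalues
  have hsum_eq : ((a-b)+d)/2 + ((a-b)-d)/2 = a - b := by ring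
  have hsq_eq : (((a-b)+d)/2)^2 + (((a-b)-d)/2)^2 = a^2 - 2*c^2 + b^2 := by
    linear_combination hd2/2
  have hexist : ∀ L L' : ℝ, 0 ≤ L → L' ≤ 0 →
      (∀ i, hC.eigenvalues i = 0 ∨ hC.eigenvalues i = L ∨ hC.eigenvalues i = L') →
      L + L' = a - b → L^2 + L'^2 = a^2 - 2*c^2 + b^2 →
      ∃ i, hC.eigenvalues i = L := by
    intro L L' hL hL' hcl hsum hsq
    by_contra hcon
    push_neg at hcon
    have hm2 : (2:ℝ) ≤ (m:ℝ) := by exact_mod_cast hm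
    by_cases hL0 : L = 0
    · have hall : ∀ i, hC.eigenvalues i = L' := by
        intro i
        rcases hcl i with h | h | h
        · exact absurd (h.trans hL0.symm) (hcon i)
        · exact absurd h (hcon i)
        · exact h
      have hSm : ∑ i, hC.eigenvalues i = (m : ℝ) * L' := by
        rw [Finset.sum_congr rfl fun i _ => hall i]
        simp [Finset.sum_const, Finset.card_univ, nsmul_eq_mul]
      rw [hS, ← hsum, hL0, zero_add] at hSm
      have hkey : ((m:ℝ) - 1) * L' = 0 := by linear_combination -hSm
      rcases mul_eq_zero.mp hkey with h' | h'
      · linarith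
      · exact hcon (Classical.arbitrary (Fin m))
          ((hall _).trans (h'.trans hL0.symm))
    · have hLpos : 0 < L := lt_of_le_of_ne hL (Ne.symm hL0)
      have hptw : ∀ i, hC.eigenvalues i ^ 2 = L' * hC.eigenvalues i := by
        intro i
        rcases hcl i with h | h | h
        · rw [h]; ring
        · exact absurd h (hcon i)
        · rw [h]; ring
      have hQS : ∑ i, hC.eigenvalues i ^ 2 = L' * ∑ i, hC.eigenvalues i := by
        rw [Finset.mul_sum]; exact Finset.sum_congr rfl fun i _ => hptw i
      rw [hQ, hS, ← hsum, ← hsq] at hQS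
      have hkey : L * (L - L') = 0 := by linear_combination hQS
      rcases mul_eq_zero.mp hkey with h' | h'
      · exact hL0 h'
      · linarith
  have hexmax : ∃ i, hC.eigenvalues i = ((a-b)+d)/2 :=
    hexist _ _ hL1 hL2 hclass hsum_eq hsq_eq
  -- for min: symmetric argument
  have hexmin : ∃ i, hC.eigenvalues i = ((a-b)-d)/2 := by
    by_contra hcon
    push_neg at hcon
    have hm2 : (2:ℝ) ≤ (m:ℝ) := by exact_mod_cast hm
    have hptw : ∀ i, hC.eigenvalues i ^ 2 = ((a-b)+d)/2 * hC.eigenvalues i := by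
      intro i
      rcases hclass i with h | h | h
      · rw [h]; ring
      · rw [h]; ring
      · exact absurd h (hcon i)
    have hQS : ∑ i, hC.eigenvalues i ^ 2 = ((a-b)+d)/2 * ∑ i, hC.eigenvalues i := by
      rw [Finset.mul_sum]; exact Finset.sum_congr rfl fun i _ => hptw i
    rw [hQ, hS, ← hsum_eq, ← hsq_eq] at hQS
    have hkey : (((a-b)-d)/2) * ((((a-b)-d)/2) - (((a-b)+d)/2)) = 0 := by
      linear_combination hQS
    have hL20 : ((a-b)-d)/2 = 0 := by
      rcases mul_eq_zero.mp hkey with h' | h'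
      · exact h'
      · have hd' : d = 0 := by linarith
        linarith [hL1, hL2]
    -- now the smallest value is 0, so every eigenvalue is 0 or L1, each ≠ L2 = 0: contradiction
    exact hcon (Classical.arbitrary (Fin m)) (by
      rcases hclass (Classical.arbitrary (Fin m)) with h | h | h
      · rw [h, hL20]
      · -- eigenvalue = L1; but then all eigenvalues = L1 ≠ 0 (else it's 0 = L2, contra hcon)
        exfalso
        have hallL1 : ∀ i, hC.eigenvalues i = ((a-b)+d)/2 := by
          intro i
          rcases hclass i with h' | h' | h'
          · exact absurd (h'.trans hL20.symm) (hcon i)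
          · exact h'
          · exact absurd h' (hcon i)
        have hSm : ∑ i, hC.eigenvalues i = (m : ℝ) * (((a-b)+d)/2) := by
          rw [Finset.sum_congr rfl fun i _ => hallL1 i]
          simp [Finset.sum_const, Finset.card_univ, nsmul_eq_mul]
        rw [hS] at hSm
        have hkey2 : ((m:ℝ) - 1) * (((a-b)+d)/2) = 0 := by linear_combination hL20 - hSm
        rcases mul_eq_zero.mp hkey2 with h' | h'
        · linarith
        · exact hcon (Classical.arbitrary (Fin m))
            ((hallL1 _).trans (h'.trans hL20.symm))
      · exact h.trans (hL20.trans hL20.symm))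
  -- compute disc
  have hna : eucNorm v ^ 2 = a := Real.sq_sqrt ha0
  have hnb : eucNorm z ^ 2 = b := Real.sq_sqrt hb0
  have hsum1 : ∑ i, (v i + z i)^2 = a + 2*c + b := by
    rw [ha, hb, hc, Finset.mul_sum, ← Finset.sum_add_distrib, ← Finset.sum_add_distrib]
    exact Finset.sum_congr rfl fun i _ => by ring
  have hsum2 : ∑ i, (v i - z i)^2 = a - 2*c + b := by
    rw [ha, hb, hc, Finset.mul_sum, ← Finset.sum_sub_distrib, ← Finset.sum_add_distrib]
    exact Finset.sum_congr rfl fun i _ => by ring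
  have hprod : eucNorm (v + z) * eucNorm (v - z) = d := by
    unfold eucNorm
    have e1 : ∑ i, (v + z) i ^2 = a + 2*c + b := by simpa using hsum1
    have e2 : ∑ i, (v - z) i ^2 = a - 2*c + b := by simpa using hsum2
    rw [e1, e2, ← Real.sqrt_mul (by nlinarith), hddef]
    congr 1; ring
  have hprod' : eucNorm (z + v) * eucNorm (z - v) = d := by
    unfold eucNorm
    have e1 : ∑ i, (z + v) i ^2 = a + 2*c + b := by
      rw [← hsum1]; exact Finset.sum_congr rfl fun i _ => by simp; ring
    have e2 : ∑ i, (z - v) i ^2 = a - 2*c + b := by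
      rw [← hsum2]; exact Finset.sum_congr rfl fun i _ => by simp; ring
    rw [e1, e2, ← Real.sqrt_mul (by nlinarith), hddef]
    congr 1; ring
  have hdisc1 : disc v z = ((a-b)+d)/2 := by
    unfold disc; rw [hprod, hna, hnb]; ring
  have hdisc2 : -disc z v = ((a-b)-d)/2 := by
    unfold disc; rw [hprod', hna, hnb]; ring
  constructor
  · rw [hdisc1]
    apply le_antisymm
    · exact ciSup_le hub
    · obtain ⟨i, hi⟩ := hexmax
      rw [← hi]
      exact le_ciSup (Set.Finite.bddAbove (Set.finite_range _)) i
  · rw [hdisc2]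
    apply le_antisymm
    · obtain ⟨i, hi⟩ := hexmin
      rw [← hi]
      exact ciInf_le (Set.Finite.bddBelow (Set.finite_range _)) i
    · exact le_ciInf hlb
end

section
/- (Lemma 3, determinant upper bound.) Let m ≥ 2 and 1 ≤ k ≤ m, let A be an m×k real matrix, and let B be an m×m positive semidefinite real matrix with eigenvalues γ₁ ≤ γ₂ ≤ … ≤ γ_m (repeated according to multiplicity). Then det(Aᵀ B A) ≤ (γ_{m−k+1}·γ_{m−k+2}·…·γ_m) · det(Aᵀ A). -/
open Matrix BigOperators

section Aux
open Finset Equiv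
variable {k m : ℕ}

private theorem det_mul_expand' (M : Matrix (Fin k) (Fin m) ℝ) (N : Matrix (Fin m) (Fin k) ℝ) :
    det (M * N) = ∑ f : Fin k → Fin m, det (M.submatrix id f) * ∏ j, N (f j) j := by
  have : det (M * N)
      = ∑ f : Fin k → Fin m, ∑ σ : Perm (Fin k),
          Equiv.Perm.sign σ * ∏ j, M (σ j) (f j) * N (f j) j := by
    simp only [det_apply', Matrix.mul_apply, prod_univ_sum, mul_sum, Fintype.piFinset_univ]
    rw [Finset.sum_comm]
  rw [this]
  refine Finset.sum_congr rfl fun f _ => ?_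
  rw [det_apply', Finset.sum_mul]
  refine Finset.sum_congr rfl fun σ _ => ?_
  simp [Finset.prod_mul_distrib, Matrix.submatrix_apply, mul_assoc]

private noncomputable def minor' (C : Matrix (Fin m) (Fin k) ℝ) (S : Finset (Fin m)) : ℝ :=
  if h : S.card = k then det (C.submatrix (S.orderEmbOfFin h) id) else 0

private theorem image_orderEmbOfFin' (S : Finset (Fin m)) (h : S.card = k) :
    Finset.image (S.orderEmbOfFin h) Finset.univ = S := by
  ext x
  simp only [Finset.mem_image, Finset.mem_univ, true_and]
  constructor
  · rintro ⟨j, rfl⟩; exact S.orderEmbOfFin_mem h j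
  · intro hx
    have : x ∈ Set.range (S.orderEmbOfFin h) := by
      rw [S.range_orderEmbOfFin h]; exact hx
    obtain ⟨j, hj⟩ := this; exact ⟨j, hj⟩

private theorem diag_expand' (C : Matrix (Fin m) (Fin k) ℝ) (d : Fin m → ℝ) :
    det (Cᵀ * diagonal d * C)
      = ∑ S ∈ (Finset.univ : Finset (Fin m)).powersetCard k,
          (∏ i ∈ S, d i) * (minor' C S) ^ 2 := by
  rw [Matrix.mul_assoc, det_mul_expand']
  rw [← Finset.sum_filter_add_sum_filter_not Finset.univ (fun f => Function.Injective f)]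
  have hzero : ∀ f ∈ Finset.univ.filter (fun f : Fin k → Fin m => ¬ Function.Injective f),
      det (Cᵀ.submatrix id f) * ∏ j, (diagonal d * C) (f j) j = 0 := by
    intro f hf
    simp only [Finset.mem_filter] at hf
    rw [Function.not_injective_iff] at hf
    obtain ⟨i, j, hfij, hij⟩ := hf.2
    rw [Matrix.det_zero_of_column_eq hij (fun l => by simp [Matrix.submatrix_apply, hfij]),
      zero_mul]
  rw [Finset.sum_eq_zero hzero, add_zero]
  rw [← Finset.sum_fiberwise_of_maps_to (g := fun f : Fin k → Fin m => Finset.image f Finset.univ)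
    (t := (Finset.univ : Finset (Fin m)).powersetCard k) ?_ _]
  swap
  · intro f hf
    simp only [Finset.mem_filter] at hf
    rw [Finset.mem_powersetCard_univ, Finset.card_image_of_injective _ hf.2, Finset.card_univ,
      Fintype.card_fin]
  refine Finset.sum_congr rfl fun S hS => ?_
  have hSc : S.card = k := Finset.mem_powersetCard_univ.mp hS
  set e := S.orderEmbOfFin hSc with he
  have key : ∑ f ∈ (Finset.univ.filter (fun f : Fin k → Fin m => Function.Injective f)).filter
        (fun f => Finset.image f Finset.univ = S),
        det (Cᵀ.submatrix id f) * ∏ j, (diagonal d * C) (f j) j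
      = ∑ τ : Perm (Fin k),
        det (Cᵀ.submatrix id (e ∘ τ)) * ∏ j, (diagonal d * C) ((e ∘ τ) j) j := by
    refine (Finset.sum_bij (fun (τ : Perm (Fin k)) (_ : τ ∈ (Finset.univ : Finset (Perm (Fin k)))) => ((e ∘ τ : Fin k → Fin m))) ?_ ?_ ?_ ?_).symm
    · intro τ _
      simp only [Finset.mem_filter, Finset.mem_univ, true_and]
      constructor
      · exact e.injective.comp τ.injective
      · calc Finset.image (fun j => e (τ j)) Finset.univ
            = Finset.image e (Finset.image τ Finset.univ) := (Finset.image_image).symm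
          _ = Finset.image e Finset.univ := by rw [Finset.image_univ_equiv]
          _ = S := image_orderEmbOfFin' S hSc
    · intro τ₁ _ τ₂ _ hcomp
      ext j
      exact congrArg Fin.val (e.injective (congrFun hcomp j))
    · intro f hf
      simp only [Finset.mem_filter, Finset.mem_univ, true_and] at hf
      obtain ⟨hinj, himg⟩ := hf
      have hmem : ∀ j, f j ∈ S := fun j => himg ▸ Finset.mem_image_of_mem f (Finset.mem_univ j)
      have hginj : Function.Injective
          (fun j => (S.orderIsoOfFin hSc).symm ⟨f j, hmem j⟩ : Fin k → Fin k) := by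
        intro a b hab
        have h2 : (⟨f a, hmem a⟩ : {x // x ∈ S}) = ⟨f b, hmem b⟩ :=
          (S.orderIsoOfFin hSc).symm.injective hab
        exact hinj (congrArg Subtype.val h2)
      have hgbij := (Finite.injective_iff_bijective).mp hginj
      refine ⟨Equiv.ofBijective _ hgbij, Finset.mem_univ _, ?_⟩
      funext j
      show e ((S.orderIsoOfFin hSc).symm ⟨f j, hmem j⟩) = f j
      have h3 : (S.orderIsoOfFin hSc) ((S.orderIsoOfFin hSc).symm ⟨f j, hmem j⟩)
          = ⟨f j, hmem j⟩ := (S.orderIsoOfFin hSc).apply_symm_apply _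
      calc e ((S.orderIsoOfFin hSc).symm ⟨f j, hmem j⟩)
          = ((S.orderIsoOfFin hSc) ((S.orderIsoOfFin hSc).symm ⟨f j, hmem j⟩) : Fin m) :=
            (Finset.coe_orderIsoOfFin_apply S hSc _).symm
        _ = f j := by rw [h3]
    · intro τ _; rfl
  rw [key]
  have hdet : ∀ τ : Perm (Fin k), det (Cᵀ.submatrix id (e ∘ τ))
      = Equiv.Perm.sign τ * det (C.submatrix e id) := by
    intro τ
    rw [← Matrix.det_transpose, Matrix.transpose_submatrix, Matrix.transpose_transpose]
    rw [show (C.submatrix (e ∘ τ) id) = (C.submatrix e id).submatrix τ id by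
      rw [Matrix.submatrix_submatrix]; rfl]
    rw [Matrix.det_permute]
  have hprod : ∀ τ : Perm (Fin k),
      (∏ j, (diagonal d * C) ((e ∘ τ) j) j)
        = (∏ i ∈ S, d i) * ∏ j, C (e (τ j)) j := by
    intro τ
    simp only [Matrix.diagonal_mul, Function.comp_apply]
    rw [Finset.prod_mul_distrib]
    congr 1
    rw [← image_orderEmbOfFin' S hSc, Finset.prod_image (fun a _ b _ h => e.injective h)]
    exact Equiv.prod_comp τ (fun j => d (e j))
  simp only [hdet, hprod]
  have : ∑ τ : Perm (Fin k), (Equiv.Perm.sign τ : ℝ) * det (C.submatrix e id) *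
      ((∏ i ∈ S, d i) * ∏ j, C (e (τ j)) j)
      = (∏ i ∈ S, d i) * (det (C.submatrix e id) *
          ∑ τ : Perm (Fin k), (Equiv.Perm.sign τ : ℝ) * ∏ j, C (e (τ j)) j) := by
    rw [Finset.mul_sum, Finset.mul_sum]
    exact Finset.sum_congr rfl fun τ _ => by ring
  rw [this]
  have hd2 : ∑ τ : Perm (Fin k), (Equiv.Perm.sign τ : ℝ) * ∏ j, C (e (τ j)) j
      = det (C.submatrix e id) := by
    rw [det_apply']
    rfl
  rw [hd2, minor', dif_pos hSc, sq]

private theorem strictMono_le_val' {f : Fin k → Fin m} (hf : StrictMono f) (j : Fin k) :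
    (j : ℕ) ≤ (f j : ℕ) := by
  obtain ⟨n, hn⟩ := j
  induction n with
  | zero => simp
  | succ p ih =>
    have hp : p < k := lt_trans (Nat.lt_succ_self p) hn
    have h1 := ih hp
    have h2 : f ⟨p, hp⟩ < f ⟨p + 1, hn⟩ := hf (by simp [Fin.lt_def])
    rw [Fin.lt_def] at h2
    simp only [Fin.val_mk] at h1 h2 ⊢
    omega

private theorem strictMono_val_le' (hkm : k ≤ m) {f : Fin k → Fin m} (hf : StrictMono f)
    (j : Fin k) : (f j : ℕ) ≤ m - k + (j : ℕ) := by
  have hg : StrictMono (fun j : Fin k => (f j.rev).rev) := by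
    intro a b hab
    simp only
    rw [Fin.rev_lt_rev]
    exact hf (Fin.rev_lt_rev.mpr hab)
  have := strictMono_le_val' hg j.rev
  simp only [Fin.val_rev] at this
  have h1 : (f j : ℕ) < m := (f j).isLt
  have h2 : (j : ℕ) < k := j.isLt
  have h3 : (f (j.rev.rev) : ℕ) < m := (f _).isLt
  rw [Fin.rev_rev] at this
  omega

private theorem prod_le_top' (hkm : k ≤ m) (γ : Fin m → ℝ) (hmono : Monotone γ)
    (hpos : ∀ i, 0 ≤ γ i) (T : Finset (Fin m)) (hT : T.card = k) :
    ∏ i ∈ T, γ i ≤ ∏ i ∈ Finset.univ.filter (fun i : Fin m => m - k ≤ (i : ℕ)), γ i := by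
  have hemb : ∀ j : Fin k, m - k + (j : ℕ) < m := fun j => by have := j.isLt; omega
  set emb : Fin k → Fin m := fun j => ⟨m - k + (j : ℕ), hemb j⟩ with hembdef
  have hinj : Function.Injective emb := by
    intro a b hab
    have := congrArg Fin.val hab
    simp only [hembdef] at this
    exact Fin.ext (by omega)
  have himg : Finset.univ.filter (fun i : Fin m => m - k ≤ (i : ℕ))
      = Finset.image emb Finset.univ := by
    ext i
    simp only [Finset.mem_filter, Finset.mem_univ, true_and, Finset.mem_image]
    constructor
    · intro hi
      have hik : (i : ℕ) - (m - k) < k := by have := i.isLt; omega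
      exact ⟨⟨(i : ℕ) - (m - k), hik⟩, Fin.ext (by simp [hembdef]; omega)⟩
    · rintro ⟨j, rfl⟩
      simp [hembdef]
  rw [himg, ← image_orderEmbOfFin' T hT,
    Finset.prod_image (fun a _ b _ h => (T.orderEmbOfFin hT).injective h),
    Finset.prod_image (fun a _ b _ h => hinj h)]
  apply Finset.prod_le_prod (fun j _ => hpos _)
  intro j _
  apply hmono
  rw [Fin.le_def]
  exact strictMono_val_le' hkm (T.orderEmbOfFin hT).strictMono j

end Aux

theorem det_upper_bound {m k : ℕ} (hm : 2 ≤ m) (hk1 : 1 ≤ k) (hkm : k ≤ m)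
    (A : Matrix (Fin m) (Fin k) ℝ) (B : Matrix (Fin m) (Fin m) ℝ)
    (hB : B.PosSemidef) (γ : Fin m → ℝ) (hmono : Monotone γ)
    (hγ : ∃ σ : Equiv.Perm (Fin m), γ = hB.1.eigenvalues ∘ σ) :
    (Aᵀ * B * A).det ≤
      (∏ i ∈ Finset.univ.filter (fun i : Fin m => m - k ≤ (i : ℕ)), γ i) * (Aᵀ * A).det := by
  classical
  obtain ⟨σ, hσ⟩ := hγ
  set d : Fin m → ℝ := hB.1.eigenvalues with hd
  have hdpos : ∀ i, 0 ≤ d i := fun i => hB.eigenvalues_nonneg i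
  have hγpos : ∀ i, 0 ≤ γ i := fun i => by rw [hσ]; exact hdpos _
  set Q : Matrix (Fin m) (Fin m) ℝ := (hB.1.eigenvectorUnitary : Matrix (Fin m) (Fin m) ℝ)
    with hQ
  have hspec : B = Q * diagonal d * Qᵀ := by
    have h := hB.1.spectral_theorem
    simpa [hQ, hd, Matrix.star_eq_conjTranspose,
      Matrix.conjTranspose_eq_transpose_of_trivial] using h
  have hQQ : Q * Qᵀ = 1 := by
    have h := (Matrix.mem_unitaryGroup_iff).mp hB.1.eigenvectorUnitary.2
    simpa [hQ, Matrix.star_eq_conjTranspose,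
      Matrix.conjTranspose_eq_transpose_of_trivial] using h
  set C : Matrix (Fin m) (Fin k) ℝ := Qᵀ * A with hC
  have key1 : Aᵀ * B * A = Cᵀ * diagonal d * C := by
    rw [hspec, hC]
    simp only [Matrix.transpose_mul, Matrix.transpose_transpose, Matrix.mul_assoc]
  have key2 : Aᵀ * A = Cᵀ * C := by
    rw [hC]
    simp only [Matrix.transpose_mul, Matrix.transpose_transpose]
    rw [Matrix.mul_assoc, ← Matrix.mul_assoc Q, hQQ, Matrix.one_mul]
  rw [key1, key2]
  have hCC : Cᵀ * C = Cᵀ * diagonal (fun _ : Fin m => (1 : ℝ)) * C := by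
    rw [Matrix.diagonal_one, Matrix.mul_one]
  rw [hCC, diag_expand', diag_expand', Finset.mul_sum]
  apply Finset.sum_le_sum
  intro S hS
  have hSc : S.card = k := Finset.mem_powersetCard_univ.mp hS
  have hprod : ∏ i ∈ S, d i
      ≤ ∏ i ∈ Finset.univ.filter (fun i : Fin m => m - k ≤ (i : ℕ)), γ i := by
    have hdi : ∀ i, d i = γ (σ.symm i) := fun i => by
      rw [hσ]; simp
    calc ∏ i ∈ S, d i = ∏ i ∈ S, γ (σ.symm i) := Finset.prod_congr rfl fun i _ => hdi i
      _ = ∏ i ∈ S.image σ.symm, γ i :=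
        (Finset.prod_image (fun a _ b _ h => σ.symm.injective h)).symm
      _ ≤ _ := prod_le_top' hkm γ hmono hγpos _
        (by rw [Finset.card_image_of_injective _ σ.symm.injective, hSc])
  calc (∏ i ∈ S, d i) * minor' C S ^ 2
      ≤ (∏ i ∈ Finset.univ.filter (fun i : Fin m => m - k ≤ (i : ℕ)), γ i) * minor' C S ^ 2 :=
        mul_le_mul_of_nonneg_right hprod (sq_nonneg _)
    _ = _ := by rw [Finset.prod_const_one, one_mul]
end

section
/- (Lemma 3, case k = 2.) Let m ≥ 2, let v, z ∈ ℝ^m, and let B be an m×m positive semidefinite real matrix with eigenvalues γ₁ ≤ … ≤ γ_m. Let [z | v] denote the m×2 matrix with columns z and v. Then det([z | v]ᵀ B [z | v]) ≤ γ_{m−1}·γ_m·(‖v‖²·‖z‖² − (vᵀz)²), where ‖·‖ is the Euclidean norm. -/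
open Matrix BigOperators

/-- The `m × 2` matrix with first column `a` and second column `b`. -/
def colPair {m : ℕ} (a b : Fin m → ℝ) : Matrix (Fin m) (Fin 2) ℝ :=
  Matrix.of fun i j => ![a i, b i] j

lemma lagrange_id {m : ℕ} (d x y : Fin m → ℝ) :
    (∑ i, d i * x i ^ 2) * (∑ i, d i * y i ^ 2) - (∑ i, d i * (x i * y i)) ^ 2
      = (∑ i, ∑ j, d i * d j * (x i * y j - x j * y i) ^ 2) / 2 := by
  have h1 : (∑ i, d i * x i ^ 2) * (∑ j, d j * y j ^ 2)
      = ∑ i, ∑ j, d i * d j * (x i ^ 2 * y j ^ 2) := by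
    rw [Finset.sum_mul_sum]
    exact Finset.sum_congr rfl fun i _ => Finset.sum_congr rfl fun j _ => by ring
  have h2 : (∑ i, d i * (x i * y i)) ^ 2
      = ∑ i, ∑ j, d i * d j * (x i * y i * (x j * y j)) := by
    rw [sq, Finset.sum_mul_sum]
    exact Finset.sum_congr rfl fun i _ => Finset.sum_congr rfl fun j _ => by ring
  have h3 : ∑ i, ∑ j, d i * d j * (x j ^ 2 * y i ^ 2)
      = ∑ i, ∑ j, d i * d j * (x i ^ 2 * y j ^ 2) := by
    rw [Finset.sum_comm]
    exact Finset.sum_congr rfl fun i _ => Finset.sum_congr rfl fun j _ => by ring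
  have key : ∑ i, ∑ j, d i * d j * (x i * y j - x j * y i) ^ 2
      = (∑ i, ∑ j, d i * d j * (x i ^ 2 * y j ^ 2))
        + (∑ i, ∑ j, d i * d j * (x j ^ 2 * y i ^ 2))
        - 2 * (∑ i, ∑ j, d i * d j * (x i * y i * (x j * y j))) := by
    rw [← Finset.sum_add_distrib, Finset.mul_sum, ← Finset.sum_sub_distrib]
    refine Finset.sum_congr rfl fun i _ => ?_
    rw [← Finset.sum_add_distrib, Finset.mul_sum, ← Finset.sum_sub_distrib]
    exact Finset.sum_congr rfl fun j _ => by ring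
  rw [h1, h2, key, h3]; ring

lemma weighted_le {m : ℕ} (d x y : Fin m → ℝ) (c : ℝ)
    (hc : ∀ i j, i ≠ j → d i * d j ≤ c) :
    (∑ i, d i * x i ^ 2) * (∑ i, d i * y i ^ 2) - (∑ i, d i * (x i * y i)) ^ 2
      ≤ c * ((∑ i, x i ^ 2) * (∑ i, y i ^ 2) - (∑ i, x i * y i) ^ 2) := by
  have h1 := lagrange_id d x y
  have h2 := lagrange_id (fun _ => (1 : ℝ)) x y
  simp only [one_mul] at h2
  rw [h1, h2, ← mul_div_assoc]
  gcongr ?_ / 2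
  rw [Finset.mul_sum]
  refine Finset.sum_le_sum fun i _ => ?_
  rw [Finset.mul_sum]
  refine Finset.sum_le_sum fun j _ => ?_
  rcases eq_or_ne i j with rfl | h
  · simp [sq_nonneg, mul_nonneg]
  · exact mul_le_mul_of_nonneg_right (hc i j h) (sq_nonneg _)

lemma eucNorm_sq {m : ℕ} (v : Fin m → ℝ) : eucNorm v ^ 2 = ∑ i, v i ^ 2 :=
  Real.sq_sqrt (Finset.sum_nonneg fun i _ => sq_nonneg _)

theorem det_upper_bound_k2 {m : ℕ} (hm : 2 ≤ m) (v z : Fin m → ℝ)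
    (B : Matrix (Fin m) (Fin m) ℝ) (hB : B.PosSemidef)
    (γ : Fin m → ℝ) (hmono : Monotone γ)
    (hγ : ∃ σ : Equiv.Perm (Fin m), γ = hB.1.eigenvalues ∘ σ) :
    ((colPair z v)ᵀ * B * colPair z v).det ≤
      γ ⟨m - 2, by omega⟩ * γ ⟨m - 1, by omega⟩ *
        (eucNorm v ^ 2 * eucNorm z ^ 2 - (v ⬝ᵥ z) ^ 2) := by
  obtain ⟨σ, hσ⟩ := hγ
  set d := hB.1.eigenvalues with hd
  set U : Matrix (Fin m) (Fin m) ℝ := (hB.1.eigenvectorUnitary : Matrix (Fin m) (Fin m) ℝ)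
    with hU
  have hspec : B = U * diagonal d * Uᵀ := by
    have := hB.1.spectral_theorem
    rwa [Unitary.conjStarAlgAut_apply, star_eq_conjTranspose, conjTranspose_eq_transpose_of_trivial,
      RCLike.ofReal_real_eq_id, Function.id_comp] at this
  have hUU : U * Uᵀ = 1 := by
    have := (Matrix.mem_unitaryGroup_iff).mp (hB.1.eigenvectorUnitary).2
    rwa [star_eq_conjTranspose, conjTranspose_eq_transpose_of_trivial] at this
  set M := colPair z v with hM
  set N := Uᵀ * M with hN
  have hG : (colPair z v)ᵀ * B * colPair z v = Nᵀ * diagonal d * N := by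
    rw [← hM, hspec, hN, transpose_mul, transpose_transpose]
    simp only [Matrix.mul_assoc]
  have hNN : Nᵀ * N = Mᵀ * M := by
    rw [hN, transpose_mul, transpose_transpose, Matrix.mul_assoc, ← Matrix.mul_assoc U,
      hUU, Matrix.one_mul]
  have hGe : ∀ a b, (Nᵀ * diagonal d * N) a b = ∑ i, d i * (N i a * N i b) := by
    intro a b
    rw [Matrix.mul_assoc, Matrix.mul_apply]
    exact Finset.sum_congr rfl fun i _ => by rw [diagonal_mul]; simp [transpose_apply]; ring
  -- columns of N
  set x : Fin m → ℝ := fun i => N i 0 with hx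
  set y : Fin m → ℝ := fun i => N i 1 with hy
  -- eigenvalue bound
  have hγnn : ∀ k, 0 ≤ γ k := fun k => by rw [hσ]; exact hB.eigenvalues_nonneg _
  set c : ℝ := γ ⟨m - 2, by omega⟩ * γ ⟨m - 1, by omega⟩ with hcdef
  have hkey : ∀ a b : Fin m, a < b → γ a * γ b ≤ c := by
    intro a b hab
    have h1 : γ a ≤ γ ⟨m - 2, by omega⟩ := by
      apply hmono; rw [Fin.le_def]; have := b.isLt; have := (Fin.lt_def.mp hab); simp; omega
    have h2 : γ b ≤ γ ⟨m - 1, by omega⟩ := by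
      apply hmono; rw [Fin.le_def]; have := b.isLt; simp; omega
    exact mul_le_mul h1 h2 (hγnn b) (hγnn _)
  have hc : ∀ i j, i ≠ j → d i * d j ≤ c := by
    intro i j hij
    have hdi : d i = γ (σ.symm i) := by rw [hσ]; simp
    have hdj : d j = γ (σ.symm j) := by rw [hσ]; simp
    have hab : σ.symm i ≠ σ.symm j := fun h => hij (by simpa using congrArg σ h)
    rw [hdi, hdj]
    rcases hab.lt_or_gt with h | h
    · exact hkey _ _ h
    · rw [mul_comm]; exact hkey _ _ h
  -- norm identities from NᵀN = MᵀM
  have hMent : ∀ k, M k 0 = z k ∧ M k 1 = v k := fun k => ⟨rfl, rfl⟩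
  have hent : ∀ a b, (∑ i, N i a * N i b) = ∑ k, M k a * M k b := by
    intro a b
    have := congrFun (congrFun hNN a) b
    rwa [Matrix.mul_apply, Matrix.mul_apply] at this
  have e00 : ∑ i, x i ^ 2 = eucNorm z ^ 2 := by
    rw [eucNorm_sq]
    calc ∑ i, x i ^ 2 = ∑ i, N i 0 * N i 0 := by
          exact Finset.sum_congr rfl fun i _ => by rw [hx]; ring
      _ = ∑ k, M k 0 * M k 0 := hent 0 0
      _ = ∑ k, z k ^ 2 := Finset.sum_congr rfl fun k _ => by
          rw [(hMent k).1]; ring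
  have e11 : ∑ i, y i ^ 2 = eucNorm v ^ 2 := by
    rw [eucNorm_sq]
    calc ∑ i, y i ^ 2 = ∑ i, N i 1 * N i 1 := by
          exact Finset.sum_congr rfl fun i _ => by rw [hy]; ring
      _ = ∑ k, M k 1 * M k 1 := hent 1 1
      _ = ∑ k, v k ^ 2 := Finset.sum_congr rfl fun k _ => by
          rw [(hMent k).2]; ring
  have e01 : ∑ i, x i * y i = v ⬝ᵥ z := by
    calc ∑ i, x i * y i = ∑ i, N i 0 * N i 1 := rfl
      _ = ∑ k, M k 0 * M k 1 := hent 0 1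
      _ = v ⬝ᵥ z := by
          rw [dotProduct]
          exact Finset.sum_congr rfl fun k _ => by
            rw [(hMent k).1, (hMent k).2]; ring
  -- put together
  rw [hG, det_fin_two, hGe, hGe, hGe, hGe]
  have hdet :
      (∑ i, d i * (N i 0 * N i 0)) * (∑ i, d i * (N i 1 * N i 1))
        - (∑ i, d i * (N i 0 * N i 1)) * (∑ i, d i * (N i 1 * N i 0))
      = (∑ i, d i * x i ^ 2) * (∑ i, d i * y i ^ 2) - (∑ i, d i * (x i * y i)) ^ 2 := by
    have a1 : ∀ i, d i * (N i 0 * N i 0) = d i * x i ^ 2 := fun i => by rw [hx]; ring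
    have a2 : ∀ i, d i * (N i 1 * N i 1) = d i * y i ^ 2 := fun i => by rw [hy]; ring
    have a3 : ∀ i, d i * (N i 0 * N i 1) = d i * (x i * y i) := fun i => by rw [hx, hy]
    have a4 : ∀ i, d i * (N i 1 * N i 0) = d i * (x i * y i) := fun i => by
      rw [hx, hy]; ring
    simp only [Finset.sum_congr rfl fun i _ => a1 i, Finset.sum_congr rfl fun i _ => a2 i,
      Finset.sum_congr rfl fun i _ => a3 i, Finset.sum_congr rfl fun i _ => a4 i]
    ring
  rw [hdet]
  calc (∑ i, d i * x i ^ 2) * (∑ i, d i * y i ^ 2) - (∑ i, d i * (x i * y i)) ^ 2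
      ≤ c * ((∑ i, x i ^ 2) * (∑ i, y i ^ 2) - (∑ i, x i * y i) ^ 2) :=
        weighted_le d x y c hc
    _ = c * (eucNorm v ^ 2 * eucNorm z ^ 2 - (v ⬝ᵥ z) ^ 2) := by
        rw [e00, e11, e01]; ring
end

section
/- (Properties of the function R_{k,t}, part of Lemma 4.) Let m ≥ 2 be an integer, let k be an integer with 1 ≤ k ≤ m−1, and let t > 0. Then R_{k,t}(0) = R_{k,t}(t/k) = 0, R_{k,t}(t/m) = t/m, R_{k,t} is strictly increasing on [0, t/m], strictly decreasing on [t/m, t/k], and strictly concave on [0, t/k]. -/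
open Matrix BigOperators

/-- The function `R_{k,t}(g) = (g^k ((t - k g)/(m - k))^(m-k))^(1/m)`. -/
noncomputable def Rfun (m k : ℕ) (t g : ℝ) : ℝ :=
  (g ^ k * ((t - (k : ℝ) * g) / ((m : ℝ) - (k : ℝ))) ^ (m - k)) ^ ((1 : ℝ) / (m : ℝ))

/-- Strict weighted AM-GM for two numbers. -/
lemma strictGM2 {a b p q : ℝ} (ha : 0 < a) (hb : 0 < b) (hab : a + b = 1)
    (hp : 0 ≤ p) (hq : 0 ≤ q) (hpq : p ≠ q) :
    p ^ a * q ^ b < a * p + b * q := by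
  rcases hp.eq_or_lt with rfl | hp
  · have hq' : 0 < q := lt_of_le_of_ne hq hpq
    rw [Real.zero_rpow ha.ne', zero_mul]
    nlinarith
  rcases hq.eq_or_lt with rfl | hq
  · rw [Real.zero_rpow hb.ne', mul_zero]
    nlinarith
  have hlog : Real.log (p ^ a * q ^ b) < Real.log (a * p + b * q) := by
    rw [Real.log_mul (Real.rpow_pos_of_pos hp a).ne' (Real.rpow_pos_of_pos hq b).ne',
      Real.log_rpow hp, Real.log_rpow hq]
    have := strictConcaveOn_log_Ioi.2 (Set.mem_Ioi.2 hp) (Set.mem_Ioi.2 hq) hpq ha hb hab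
    simpa [smul_eq_mul] using this
  calc p ^ a * q ^ b = Real.exp (Real.log (p ^ a * q ^ b)) :=
        (Real.exp_log (by positivity)).symm
    _ < Real.exp (Real.log (a * p + b * q)) := Real.exp_lt_exp.2 hlog
    _ = a * p + b * q := Real.exp_log (by positivity)

theorem Rfun_properties {m k : ℕ} (hm : 2 ≤ m) (hk1 : 1 ≤ k) (hkm : k ≤ m - 1)
    (t : ℝ) (ht : 0 < t) :
    Rfun m k t 0 = 0 ∧ Rfun m k t (t / (k : ℝ)) = 0 ∧
    Rfun m k t (t / (m : ℝ)) = t / (m : ℝ) ∧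
    StrictMonoOn (Rfun m k t) (Set.Icc 0 (t / (m : ℝ))) ∧
    StrictAntiOn (Rfun m k t) (Set.Icc (t / (m : ℝ)) (t / (k : ℝ))) ∧
    StrictConcaveOn ℝ (Set.Icc 0 (t / (k : ℝ))) (Rfun m k t) := by
  have hkmn : k < m := by omega
  have hm0 : (0:ℝ) < m := by positivity
  have hk0 : (0:ℝ) < k := by exact_mod_cast Nat.pos_of_ne_zero (by omega)
  have hKM : (k:ℝ) < m := by exact_mod_cast hkmn
  have hMK : (0:ℝ) < (m:ℝ) - k := by linarith
  have castmk : ((m - k : ℕ) : ℝ) = (m:ℝ) - k := by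
    push_cast [Nat.cast_sub hkmn.le]; ring
  set aa : ℝ := (k:ℝ) / m with haadef
  set bb : ℝ := ((m:ℝ) - k) / m with hbbdef
  have haa : 0 < aa := by positivity
  have hbb : 0 < bb := by positivity
  have hab : aa + bb = 1 := by rw [haadef, hbbdef]; field_simp; ring
  -- rpow form of Rfun on [0, t/k]
  have FR : ∀ g : ℝ, 0 ≤ g → g ≤ t / k →
      Rfun m k t g = g ^ aa * ((t - k * g) / ((m:ℝ) - k)) ^ bb := by
    intro g hg hg'
    have hg2 : 0 ≤ (t - k * g) / ((m:ℝ) - k) := by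
      apply div_nonneg _ hMK.le
      have : g * k ≤ t := (le_div_iff₀ hk0).mp hg'
      linarith [mul_comm g (k:ℝ)]
    unfold Rfun
    rw [Real.mul_rpow (pow_nonneg hg _) (pow_nonneg hg2 _),
      ← Real.rpow_natCast g k, ← Real.rpow_mul hg,
      ← Real.rpow_natCast ((t - k * g) / ((m:ℝ) - k)) (m - k),
      ← Real.rpow_mul hg2, castmk, mul_one_div, mul_one_div]
  -- values
  have val1 : Rfun m k t 0 = 0 := by
    unfold Rfun
    rw [zero_pow (by omega), zero_mul, Real.zero_rpow (by positivity)]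
  have val2 : Rfun m k t (t / k) = 0 := by
    unfold Rfun
    rw [mul_div_cancel₀ t hk0.ne', sub_self, zero_div, zero_pow (by omega), mul_zero,
      Real.zero_rpow (by positivity)]
  have val3 : Rfun m k t (t / m) = t / m := by
    have h1 : (t - k * (t / m)) / ((m:ℝ) - k) = t / m := by
      field_simp
    unfold Rfun
    rw [h1, ← pow_add, show k + (m - k) = m from by omega,
      ← Real.rpow_natCast (t / m) m, ← Real.rpow_mul (by positivity), mul_one_div,
      div_self hm0.ne', Real.rpow_one]
  -- the weighted arithmetic mean is constant
  have keysum : ∀ g : ℝ, aa * g + bb * ((t - k * g) / ((m:ℝ) - k)) = t / m := by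
    intro g
    rw [haadef, hbbdef]
    field_simp
    ring
  -- strict maximum at t/m
  have strictmax : ∀ g : ℝ, 0 ≤ g → g ≤ t / k → g ≠ t / m → Rfun m k t g < t / m := by
    intro g hg hg' hgm
    have hg2 : 0 ≤ (t - k * g) / ((m:ℝ) - k) := by
      apply div_nonneg _ hMK.le
      have : g * k ≤ t := (le_div_iff₀ hk0).mp hg'
      linarith [mul_comm g (k:ℝ)]
    have hne : g ≠ (t - k * g) / ((m:ℝ) - k) := by
      intro hcontra
      apply hgm
      rw [eq_div_iff hMK.ne'] at hcontra
      rw [eq_div_iff hm0.ne']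
      linear_combination hcontra
    rw [FR g hg hg']
    calc g ^ aa * ((t - k * g) / ((m:ℝ) - k)) ^ bb
        < aa * g + bb * ((t - k * g) / ((m:ℝ) - k)) := strictGM2 haa hbb hab hg hg2 hne
      _ = t / m := keysum g
  have lemax : ∀ g : ℝ, 0 ≤ g → g ≤ t / k → Rfun m k t g ≤ t / m := by
    intro g hg hg'
    by_cases hgm : g = t / m
    · rw [hgm, val3]
    · exact (strictmax g hg hg' hgm).le
  have hsub : t / m ≤ t / k := by
    rw [div_le_div_iff₀ hm0 hk0]
    nlinarith [mul_le_mul_of_nonneg_left hKM.le ht.le]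
  -- the concavity core
  have sc : ∀ x ∈ Set.Icc (0:ℝ) (t / k), ∀ y ∈ Set.Icc (0:ℝ) (t / k), x ≠ y →
      ∀ μ lam : ℝ, 0 < μ → 0 < lam → μ + lam = 1 →
      μ * Rfun m k t x + lam * Rfun m k t y < Rfun m k t (μ * x + lam * y) := by
    intro x hx y hy hxy μ lam hμ hlam hsum
    obtain ⟨hx0, hxk⟩ := hx
    obtain ⟨hy0, hyk⟩ := hy
    set z := μ * x + lam * y with hzdef
    have hcomb : ∀ c : ℝ, μ * c + lam * c = c := by
      intro c; rw [← add_mul, hsum, one_mul]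
    have hz0 : 0 < z := by
      rcases hx0.eq_or_lt with heq | hx0'
      · have hy' : 0 < y := lt_of_le_of_ne hy0 (heq ▸ hxy)
        have h1 : 0 < lam * y := mul_pos hlam hy'
        have h2 : 0 ≤ μ * x := mul_nonneg hμ.le hx0
        rw [hzdef]; linarith
      · have h1 : 0 < μ * x := mul_pos hμ hx0'
        have h2 : 0 ≤ lam * y := mul_nonneg hlam.le hy0
        rw [hzdef]; linarith
    have hzk : z < t / k := by
      rcases hxk.lt_or_eq with hx' | heq
      · have h1 : μ * x < μ * (t / k) := mul_lt_mul_of_pos_left hx' hμ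
        have h2 : lam * y ≤ lam * (t / k) := mul_le_mul_of_nonneg_left hyk hlam.le
        rw [hzdef]; linarith [hcomb (t / k)]
      · have hy' : y < t / k := lt_of_le_of_ne hyk (fun h => hxy (by rw [heq, h]))
        have h1 : μ * x ≤ μ * (t / k) := mul_le_mul_of_nonneg_left hxk hμ.le
        have h2 : lam * y < lam * (t / k) := mul_lt_mul_of_pos_left hy' hlam
        rw [hzdef]; linarith [hcomb (t / k)]
    have htz : 0 < t - k * z := by
      have h1 : z * k < t := (lt_div_iff₀ hk0).mp hzk
      linarith [mul_comm z (k:ℝ)]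
    have htx : 0 ≤ t - k * x := by
      have h1 : x * k ≤ t := (le_div_iff₀ hk0).mp hxk
      linarith [mul_comm x (k:ℝ)]
    have hty : 0 ≤ t - k * y := by
      have h1 : y * k ≤ t := (le_div_iff₀ hk0).mp hyk
      linarith [mul_comm y (k:ℝ)]
    rw [FR x hx0 hxk, FR y hy0 hyk, FR z hz0.le hzk.le]
    set Hx := (t - k * x) / ((m:ℝ) - k) with hHxdef
    set Hy := (t - k * y) / ((m:ℝ) - k) with hHydef
    set Hz := (t - k * z) / ((m:ℝ) - k) with hHzdef
    have hHx0 : 0 ≤ Hx := div_nonneg htx hMK.le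
    have hHy0 : 0 ≤ Hy := div_nonneg hty hMK.le
    have hHz0 : 0 < Hz := div_pos htz hMK
    have hxz : x ≠ z := by
      intro h
      apply hxy
      have h2 : lam * x = lam * y := by
        rw [hzdef] at h; linear_combination h + x * hsum
      exact mul_left_cancel₀ hlam.ne' h2
    have hyz : y ≠ z := by
      intro h
      apply hxy
      have h2 : μ * x = μ * y := by
        rw [hzdef] at h; linear_combination -h - y * hsum
      exact mul_left_cancel₀ hμ.ne' h2
    have hr : ∀ w : ℝ, w ≠ z → w / z ≠ ((t - k * w) / ((m:ℝ) - k)) / Hz := by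
      intro w hwz hcontra
      apply hwz
      rw [div_eq_div_iff hz0.ne' hHz0.ne', hHzdef] at hcontra
      have h2 : w * (t - k * z) = (t - k * w) * z := by
        field_simp at hcontra
        linear_combination hcontra
      have h3 : w * t = z * t := by linear_combination h2
      exact mul_right_cancel₀ ht.ne' h3
    have gx := strictGM2 haa hbb hab (div_nonneg hx0 hz0.le) (div_nonneg hHx0 hHz0.le)
      (by rw [hHxdef]; exact hr x hxz)
    have gy := strictGM2 haa hbb hab (div_nonneg hy0 hz0.le) (div_nonneg hHy0 hHz0.le)
      (by rw [hHydef]; exact hr y hyz)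
    have hFz : 0 < z ^ aa * Hz ^ bb := by positivity
    have hza : (0:ℝ) < z ^ aa := Real.rpow_pos_of_pos hz0 aa
    have hzb : (0:ℝ) < Hz ^ bb := Real.rpow_pos_of_pos hHz0 bb
    have hfx : x ^ aa * Hx ^ bb = (z ^ aa * Hz ^ bb) * ((x / z) ^ aa * (Hx / Hz) ^ bb) := by
      rw [Real.div_rpow hx0 hz0.le, Real.div_rpow hHx0 hHz0.le]
      field_simp
    have hfy : y ^ aa * Hy ^ bb = (z ^ aa * Hz ^ bb) * ((y / z) ^ aa * (Hy / Hz) ^ bb) := by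
      rw [Real.div_rpow hy0 hz0.le, Real.div_rpow hHy0 hHz0.le]
      field_simp
    have e1 : μ * (x / z) + lam * (y / z) = 1 := by
      rw [mul_div_assoc', mul_div_assoc', ← add_div, ← hzdef, div_self hz0.ne']
    have hHsum : μ * Hx + lam * Hy = Hz := by
      rw [hHxdef, hHydef, hHzdef, hzdef]
      field_simp
      linear_combination t * hsum
    have e2 : μ * (Hx / Hz) + lam * (Hy / Hz) = 1 := by
      field_simp
      linear_combination hHsum
    have key : μ * (aa * (x / z) + bb * (Hx / Hz)) + lam * (aa * (y / z) + bb * (Hy / Hz)) = 1 := by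
      linear_combination aa * e1 + bb * e2 + hab
    calc μ * (x ^ aa * Hx ^ bb) + lam * (y ^ aa * Hy ^ bb)
        = (z ^ aa * Hz ^ bb) *
            (μ * ((x / z) ^ aa * (Hx / Hz) ^ bb) + lam * ((y / z) ^ aa * (Hy / Hz) ^ bb)) := by
          rw [hfx, hfy]; ring
      _ < (z ^ aa * Hz ^ bb) *
            (μ * (aa * (x / z) + bb * (Hx / Hz)) + lam * (aa * (y / z) + bb * (Hy / Hz))) := by
          apply mul_lt_mul_of_pos_left _ hFz
          exact add_lt_add (mul_lt_mul_of_pos_left gx hμ) (mul_lt_mul_of_pos_left gy hlam)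
      _ = z ^ aa * Hz ^ bb := by rw [key, mul_one]
  have htm0 : (0:ℝ) ≤ t / m := by positivity
  refine ⟨val1, val2, val3, ?_, ?_, ⟨convex_Icc _ _, ?_⟩⟩
  · -- StrictMonoOn on [0, t/m]
    intro x hx y hy hxy
    have hxk : x ≤ t / k := le_trans hx.2 hsub
    rcases eq_or_lt_of_le hy.2 with heq | hlt
    · rw [heq, val3]
      exact strictmax x hx.1 hxk (by rw [← heq]; exact hxy.ne)
    · have hx_lt : x < t / m := hxy.trans hlt
      set lam := (y - x) / (t / m - x) with hlamdef
      have hlam0 : 0 < lam := div_pos (sub_pos.2 hxy) (sub_pos.2 hx_lt)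
      have hlam1 : lam < 1 := (div_lt_one (sub_pos.2 hx_lt)).2 (by linarith)
      have hy_eq : (1 - lam) * x + lam * (t / m) = y := by
        have hd : t / m - x ≠ 0 := sub_ne_zero.mpr hx_lt.ne'
        have h5 : lam * (t / m - x) = y - x := by
          rw [hlamdef, div_mul_cancel₀ _ hd]
        linear_combination h5
      have h1 := sc x ⟨hx.1, hxk⟩ (t / m) ⟨htm0, hsub⟩ hx_lt.ne (1 - lam) lam
        (by linarith) hlam0 (by ring)
      rw [hy_eq, val3] at h1
      have h2 : Rfun m k t x ≤ t / m := lemax x hx.1 hxk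
      linarith [mul_le_mul_of_nonneg_left h2 hlam0.le]
  · -- StrictAntiOn on [t/m, t/k]
    intro x hx y hy hxy
    have hy0 : (0:ℝ) ≤ y := le_trans htm0 hy.1
    rcases eq_or_lt_of_le hx.1 with heq | hlt
    · rw [← heq, val3]
      exact strictmax y hy0 hy.2 (by rw [heq]; exact hxy.ne')
    · set lam := (x - t / m) / (y - t / m) with hlamdef
      have hty : t / m < y := hlt.trans hxy
      have hlam0 : 0 < lam := div_pos (sub_pos.2 hlt) (sub_pos.2 hty)
      have hlam1 : lam < 1 := (div_lt_one (sub_pos.2 hty)).2 (by linarith)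
      have hx_eq : (1 - lam) * (t / m) + lam * y = x := by
        have hd : y - t / m ≠ 0 := sub_ne_zero.mpr hty.ne'
        have h5 : lam * (y - t / m) = x - t / m := by
          rw [hlamdef, div_mul_cancel₀ _ hd]
        linear_combination h5
      have h1 := sc (t / m) ⟨htm0, hsub⟩ y ⟨hy0, hy.2⟩ hty.ne (1 - lam) lam
        (by linarith) hlam0 (by ring)
      rw [hx_eq, val3] at h1
      have h2 : Rfun m k t y ≤ t / m := lemax y hy0 hy.2
      linarith [mul_le_mul_of_nonneg_left h2 (by linarith : (0:ℝ) ≤ 1 - lam)]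
  · -- strict concavity
    intro x hx y hy hxy p q hp hq hpq
    simpa [smul_eq_mul] using sc x hx y hy hxy p q hp hq hpq
end

section
/- (Existence and uniqueness of the roots of R_{k,t}, part of Lemma 4.) Let m ≥ 2 be an integer, let k be an integer with 1 ≤ k ≤ m−1, let t > 0, and let d > 0 satisfy d^{1/m} ≤ t/m. Then the equation R_{k,t}(g) = d^{1/m} has exactly one solution g in the interval [0, t/m] and exactly one solution g in the interval [t/m, t/k]. -/
open Matrix BigOperators

theorem Rfun_roots_exist_unique {m k : ℕ} (hm : 2 ≤ m) (hk1 : 1 ≤ k) (hkm : k ≤ m - 1)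
    (t d : ℝ) (ht : 0 < t) (hd : 0 < d)
    (hdt : d ^ ((1 : ℝ) / (m : ℝ)) ≤ t / (m : ℝ)) :
    (∃! g : ℝ, g ∈ Set.Icc (0 : ℝ) (t / (m : ℝ)) ∧
      Rfun m k t g = d ^ ((1 : ℝ) / (m : ℝ))) ∧
    (∃! g : ℝ, g ∈ Set.Icc (t / (m : ℝ)) (t / (k : ℝ)) ∧
      Rfun m k t g = d ^ ((1 : ℝ) / (m : ℝ))) := by
  have hklt : k < m := by omega
  have hk0 : 0 < k := hk1
  have hmR : (0 : ℝ) < m := by exact_mod_cast (by omega : 0 < m)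
  have hkR : (0 : ℝ) < k := by exact_mod_cast hk0
  have hkmR : (k : ℝ) < m := by exact_mod_cast hklt
  have hmk : (0 : ℝ) < (m : ℝ) - k := by linarith
  have hcast : ((m - k : ℕ) : ℝ) = (m : ℝ) - k := by
    push_cast [Nat.cast_sub hklt.le]; ring
  set C : ℝ := ((m : ℝ) - k) ^ (m - k) with hC
  have hCpos : 0 < C := pow_pos hmk _
  set F : ℝ → ℝ := fun g => g ^ k * (t - (k : ℝ) * g) ^ (m - k) with hF
  -- derivative of F
  have hder : ∀ x : ℝ, HasDerivAt F
      ((k : ℝ) * x ^ (k - 1) * (t - (k : ℝ) * x) ^ (m - k)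
        + x ^ k * (((m - k : ℕ) : ℝ) * (t - (k : ℝ) * x) ^ (m - k - 1) * (-(k : ℝ)))) x := by
    intro x
    have hinner : HasDerivAt (fun g : ℝ => t - (k : ℝ) * g) (-(k : ℝ)) x := by
      simpa [Pi.sub_def] using (hasDerivAt_const x t).sub ((hasDerivAt_id x).const_mul (k : ℝ))
    have houter : HasDerivAt (fun g : ℝ => (t - (k : ℝ) * g) ^ (m - k))
        (((m - k : ℕ) : ℝ) * (t - (k : ℝ) * x) ^ (m - k - 1) * (-(k : ℝ))) x := by
      simpa [Function.comp_def] using (hasDerivAt_pow (m - k) (t - (k : ℝ) * x)).comp x hinner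
    simpa [hF, Pi.mul_def] using (hasDerivAt_pow k x).mul houter
  have hfact : ∀ x : ℝ, deriv F x
      = (k : ℝ) * (x ^ (k - 1) * (t - (k : ℝ) * x) ^ (m - k - 1)) * (t - (m : ℝ) * x) := by
    intro x
    rw [(hder x).deriv]
    have hxk : x ^ k = x ^ (k - 1) * x := by
      rw [← pow_succ]; congr 1; omega
    have hTk : (t - (k : ℝ) * x) ^ (m - k) = (t - (k : ℝ) * x) ^ (m - k - 1) * (t - (k : ℝ) * x) := by
      rw [← pow_succ]; congr 1; omega
    rw [hxk, hTk, hcast]; ring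
  have hcont : Continuous F := by fun_prop
  have htm_pos : (0 : ℝ) < t / m := by positivity
  have htmk : t / (m : ℝ) ≤ t / (k : ℝ) := by
    apply div_le_div_of_nonneg_left ht.le hkR; exact hkmR.le
  -- strict monotonicity on [0, t/m]
  have hmono : StrictMonoOn F (Set.Icc 0 (t / m)) := by
    apply strictMonoOn_of_deriv_pos (convex_Icc _ _) hcont.continuousOn
    intro x hx
    rw [interior_Icc] at hx
    rw [hfact]
    have hx0 : 0 < x := hx.1
    have h1 : 0 < t - (m : ℝ) * x := by
      have := (lt_div_iff₀ hmR).mp hx.2; linarith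
    have h2 : 0 < t - (k : ℝ) * x := by nlinarith
    exact mul_pos (mul_pos hkR (mul_pos (pow_pos hx0 _) (pow_pos h2 _))) h1
  -- strict antitonicity on [t/m, t/k]
  have hanti : StrictAntiOn F (Set.Icc (t / m) (t / k)) := by
    apply strictAntiOn_of_deriv_neg (convex_Icc _ _) hcont.continuousOn
    intro x hx
    rw [interior_Icc] at hx
    rw [hfact]
    have hx0 : 0 < x := lt_of_lt_of_le htm_pos hx.1.le
    have h1 : t - (m : ℝ) * x < 0 := by
      have := (div_lt_iff₀ hmR).mp hx.1; linarith
    have h2 : 0 < t - (k : ℝ) * x := by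
      have := (lt_div_iff₀ hkR).mp hx.2; linarith
    exact mul_neg_of_pos_of_neg (mul_pos hkR (mul_pos (pow_pos hx0 _) (pow_pos h2 _))) h1
  -- values of F at endpoints
  have hF0 : F 0 = 0 := by simp [hF, zero_pow (by omega : k ≠ 0)]
  have hFtk : F (t / k) = 0 := by
    have h : t - (k : ℝ) * (t / k) = 0 := by field_simp; ring
    simp [hF, h, zero_pow (by omega : m - k ≠ 0)]
  have h1 : t - (k : ℝ) * (t / m) = (t / m) * ((m : ℝ) - k) := by field_simp
  have hFtm : F (t / m) = (t / m) ^ m * C := by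
    simp only [hF, h1, mul_pow, hC]
    rw [← mul_assoc, ← pow_add]
    congr 2
    omega
  -- d ≤ (t/m)^m
  have hdm : d ≤ (t / m) ^ m := by
    have h0 : (0:ℝ) ≤ d ^ ((1:ℝ)/m) := Real.rpow_nonneg hd.le _
    have := pow_le_pow_left₀ h0 hdt m
    rwa [← Real.rpow_natCast (d ^ ((1:ℝ)/m)) m, ← Real.rpow_mul hd.le,
      one_div, inv_mul_cancel₀ (ne_of_gt hmR), Real.rpow_one] at this
  have hDpos : 0 < d * C := mul_pos hd hCpos
  have hDle : d * C ≤ F (t / m) := by rw [hFtm]; nlinarith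
  -- translation: Rfun g = d^(1/m) ↔ F g = d * C, for g in the domain
  have hRiff : ∀ g : ℝ, 0 ≤ g → (k : ℝ) * g ≤ t →
      (Rfun m k t g = d ^ ((1 : ℝ) / (m : ℝ)) ↔ F g = d * C) := by
    intro g hg hgt
    have hfgF : g ^ k * ((t - (k : ℝ) * g) / ((m : ℝ) - (k : ℝ))) ^ (m - k) = F g / C := by
      rw [div_pow, hF, hC, mul_div_assoc]
    have hfg0 : 0 ≤ F g / C := by
      rw [← hfgF]
      have : (0:ℝ) ≤ (t - (k : ℝ) * g) / ((m : ℝ) - k) := by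
        apply div_nonneg (by linarith) hmk.le
      positivity
    constructor
    · intro h
      rw [Rfun, hfgF] at h
      have hinj := Real.rpow_left_injOn (x := (1 : ℝ) / m) (by positivity)
      have := hinj (by simpa using hfg0) (by simpa using hd.le) h
      field_simp at this ⊢
      linarith [this]
    · intro h
      rw [Rfun, hfgF, h, mul_div_assoc, div_self (ne_of_gt hCpos), mul_one]
  constructor
  · -- first interval [0, t/m]
    have hsub : Set.Icc (F 0) (F (t / m)) ⊆ F '' Set.Icc 0 (t / m) :=
      intermediate_value_Icc htm_pos.le hcont.continuousOn
    obtain ⟨g, hgmem, hgF⟩ := hsub ⟨by rw [hF0]; exact hDpos.le, hDle⟩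
    have hside : ∀ y ∈ Set.Icc (0:ℝ) (t / m), 0 ≤ y ∧ (k : ℝ) * y ≤ t := by
      intro y hy
      refine ⟨hy.1, ?_⟩
      have : (k : ℝ) * y ≤ (m : ℝ) * (t / m) := by
        apply mul_le_mul hkmR.le hy.2 hy.1 hmR.le
      rw [mul_div_cancel₀ t (ne_of_gt hmR)] at this
      exact this
    refine ⟨g, ⟨hgmem, (hRiff g (hside g hgmem).1 (hside g hgmem).2).mpr hgF⟩, ?_⟩
    rintro y ⟨hymem, hyR⟩
    have hyF := (hRiff y (hside y hymem).1 (hside y hymem).2).mp hyR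
    exact hmono.injOn hymem hgmem (hyF.trans hgF.symm)
  · -- second interval [t/m, t/k]
    have hsub : Set.Icc (F (t / k)) (F (t / m)) ⊆ F '' Set.Icc (t / m) (t / k) :=
      intermediate_value_Icc' htmk hcont.continuousOn
    obtain ⟨g, hgmem, hgF⟩ := hsub ⟨by rw [hFtk]; exact hDpos.le, hDle⟩
    have hside : ∀ y ∈ Set.Icc (t / m) (t / k), 0 ≤ y ∧ (k : ℝ) * y ≤ t := by
      intro y hy
      refine ⟨le_trans htm_pos.le hy.1, ?_⟩
      have := (le_div_iff₀ hkR).mp hy.2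
      linarith
    refine ⟨g, ⟨hgmem, (hRiff g (hside g hgmem).1 (hside g hgmem).2).mpr hgF⟩, ?_⟩
    rintro y ⟨hymem, hyR⟩
    have hyF := (hRiff y (hside y hymem).1 (hside y hymem).2).mp hyR
    exact hanti.injOn hymem hgmem (hyF.trans hgF.symm)
end

section
/- (Lemma 4, eigenvalue product bounds.) Let m ≥ 2 be an integer, let k be an integer with 1 ≤ k ≤ m−1, let t > 0 and d > 0 satisfy d^{1/m} ≤ t/m, and let ĝ ∈ [0, t/m] and ḡ ∈ [t/m, t/k] satisfy R_{k,t}(ĝ) = R_{k,t}(ḡ) = d^{1/m}. Let B be an m×m positive definite real matrix with eigenvalues γ₁ ≤ … ≤ γ_m such that det(B⁻¹) ≥ d and tr(B⁻¹) ≤ t. Then for any indices 1 ≤ i₁ < … < i_k ≤ m, ĝ ≤ (Π_{j=1}^k γ_{i_j}⁻¹)^{1/k} ≤ ḡ. Moreover, for k = m the same conclusion holds with ĝ = d^{1/m} and ḡ = t/m. -/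
open Matrix BigOperators


lemma trace_det_inv {m : ℕ} (B : Matrix (Fin m) (Fin m) ℝ) (hB : B.PosDef) :
    (B⁻¹).trace = ∑ i, (hB.1.eigenvalues i)⁻¹ ∧
    (B⁻¹).det = ∏ i, (hB.1.eigenvalues i)⁻¹ := by
  have hev : ∀ i, hB.1.eigenvalues i ≠ 0 := fun i => (hB.eigenvalues_pos i).ne'
  set U : Matrix (Fin m) (Fin m) ℝ := (hB.1.eigenvectorUnitary : Matrix (Fin m) (Fin m) ℝ) with hU
  have hU1 : U * star U = 1 := Matrix.mem_unitaryGroup_iff.mp hB.1.eigenvectorUnitary.2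
  have hU2 : star U * U = 1 := Matrix.mem_unitaryGroup_iff'.mp hB.1.eigenvectorUnitary.2
  have hBst : B = U * Matrix.diagonal hB.1.eigenvalues * star U := hB.1.spectral_theorem
  have hDD : Matrix.diagonal hB.1.eigenvalues *
      Matrix.diagonal (fun i => (hB.1.eigenvalues i)⁻¹) = 1 := by
    rw [Matrix.diagonal_mul_diagonal]
    convert Matrix.diagonal_one using 2
    exact funext fun i => mul_inv_cancel₀ (hev i)
  have hBinv : B⁻¹ = U * Matrix.diagonal (fun i => (hB.1.eigenvalues i)⁻¹) * star U := by
    apply Matrix.inv_eq_right_inv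
    calc B * (U * Matrix.diagonal (fun i => (hB.1.eigenvalues i)⁻¹) * star U)
        = U * Matrix.diagonal hB.1.eigenvalues * star U *
          (U * Matrix.diagonal (fun i => (hB.1.eigenvalues i)⁻¹) * star U) := by rw [← hBst]
      _ = U * (Matrix.diagonal hB.1.eigenvalues * ((star U * U) *
            Matrix.diagonal (fun i => (hB.1.eigenvalues i)⁻¹))) * star U := by
          simp only [Matrix.mul_assoc]
      _ = 1 := by rw [hU2, Matrix.one_mul, hDD, Matrix.mul_one, hU1]
  constructor
  · rw [hBinv, Matrix.trace_mul_comm, ← Matrix.mul_assoc, hU2, Matrix.one_mul,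
      Matrix.trace_diagonal]
  · rw [hBinv, Matrix.det_mul, Matrix.det_mul, Matrix.det_diagonal]
    have h1 : U.det * (star U).det = 1 := by rw [← Matrix.det_mul, hU1, Matrix.det_one]
    calc U.det * (∏ i, (hB.1.eigenvalues i)⁻¹) * (star U).det
        = U.det * (star U).det * ∏ i, (hB.1.eigenvalues i)⁻¹ := by ring
      _ = ∏ i, (hB.1.eigenvalues i)⁻¹ := by rw [h1, one_mul]


lemma amgm {ι : Type*} (s : Finset ι) (hs : s.Nonempty) (f : ι → ℝ)
    (hf : ∀ i ∈ s, 0 ≤ f i) :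
    (∏ i ∈ s, f i) ^ ((1 : ℝ) / s.card) ≤ (∑ i ∈ s, f i) / s.card := by
  have hc : (0 : ℝ) < s.card := by exact_mod_cast Finset.card_pos.mpr hs
  have h := Real.geom_mean_le_arith_mean_weighted s (fun _ => (s.card : ℝ)⁻¹) f
    (fun i _ => by positivity)
    (by rw [Finset.sum_const, nsmul_eq_mul, mul_inv_cancel₀ hc.ne'])
    hf
  calc (∏ i ∈ s, f i) ^ ((1 : ℝ) / s.card)
      = ∏ i ∈ s, f i ^ ((s.card : ℝ))⁻¹ := by
        rw [one_div, ← Real.finset_prod_rpow s f hf]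
    _ ≤ ∑ i ∈ s, ((s.card : ℝ))⁻¹ * f i := h
    _ = (∑ i ∈ s, f i) / s.card := by
        rw [← Finset.mul_sum, div_eq_inv_mul]

lemma Fmono (k n : ℕ) (hk : 1 ≤ k) (hn : 1 ≤ n) (t : ℝ) (ht : 0 < t) :
    StrictMonoOn (fun x : ℝ => x ^ k * (t - (k : ℝ) * x) ^ n)
      (Set.Icc 0 (t / ((k : ℝ) + n))) ∧
    StrictAntiOn (fun x : ℝ => x ^ k * (t - (k : ℝ) * x) ^ n)
      (Set.Icc (t / ((k : ℝ) + n)) (t / (k : ℝ))) := by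
  obtain ⟨a, rfl⟩ : ∃ a, k = a + 1 := ⟨k - 1, (Nat.succ_pred_eq_of_pos hk).symm⟩
  obtain ⟨b, rfl⟩ : ∃ b, n = b + 1 := ⟨n - 1, (Nat.succ_pred_eq_of_pos hn).symm⟩
  set k := a + 1
  set n := b + 1
  have hk0 : (0:ℝ) < k := by positivity
  have hderiv : ∀ x : ℝ, HasDerivAt (fun x : ℝ => x ^ k * (t - (k : ℝ) * x) ^ n)
      ((k:ℝ) * x ^ a * (t - (k:ℝ)*x) ^ b * (t - ((k:ℝ)+n) * x)) x := by
    intro x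
    have h1 : HasDerivAt (fun x : ℝ => x ^ k) ((k:ℝ) * x ^ a) x := by
      have h := hasDerivAt_pow k x; rwa [show k - 1 = a from rfl] at h
    have hg : HasDerivAt (fun x : ℝ => t - (k:ℝ) * x) (0 - (k:ℝ)) x := by
      have := ((hasDerivAt_id x).const_mul (k:ℝ)).const_sub t
      simpa using this
    have h2 : HasDerivAt (fun x : ℝ => (t - (k:ℝ)*x) ^ n)
        ((n:ℝ) * (t - (k:ℝ)*x) ^ b * (0 - (k:ℝ))) x := by
      have h := hg.fun_pow n; rwa [show n - 1 = b from rfl] at h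
    have : HasDerivAt (fun x : ℝ => x ^ k * (t - (k : ℝ) * x) ^ n) _ x := h1.fun_mul h2
    convert this using 1
    show _ = (k:ℝ) * x ^ a * (t - (k:ℝ)*x) ^ n + x ^ k * ((n:ℝ) * (t - (k:ℝ)*x) ^ b * (0 - (k:ℝ)))
    have e1 : (t - (k:ℝ)*x) ^ n = (t - (k:ℝ)*x) ^ b * (t - (k:ℝ)*x) := pow_succ _ _
    have e2 : x ^ k = x ^ a * x := pow_succ _ _
    rw [e1, e2]
    push_cast
    ring
  have hcont : ContinuousOn (fun x : ℝ => x ^ k * (t - (k : ℝ) * x) ^ n) Set.univ := by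
    fun_prop
  constructor
  · apply strictMonoOn_of_deriv_pos (convex_Icc _ _) (hcont.mono (Set.subset_univ _))
    intro x hx
    rw [interior_Icc] at hx
    rw [(hderiv x).deriv]
    have hx0 : 0 < x := hx.1
    have hxm : ((k:ℝ)+n) * x < t := by
      have := hx.2
      rw [lt_div_iff₀ (by positivity)] at this
      linarith
    have hkx : (k:ℝ) * x < t := by
      have : (k:ℝ) * x ≤ ((k:ℝ)+n) * x := by
        have : (0:ℝ) ≤ (n:ℝ) * x := by positivity
        nlinarith
      linarith
    have : (0:ℝ) < t - (k:ℝ)*x := by linarith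
    have : (0:ℝ) < t - ((k:ℝ)+n)*x := by linarith
    positivity
  · apply strictAntiOn_of_deriv_neg (convex_Icc _ _) (hcont.mono (Set.subset_univ _))
    intro x hx
    rw [interior_Icc] at hx
    rw [(hderiv x).deriv]
    have hx0 : 0 < x := lt_of_lt_of_le (by positivity) hx.1.le
    have hkx : (k:ℝ) * x < t := by
      have := hx.2
      rw [lt_div_iff₀ hk0] at this
      linarith
    have hxm : t < ((k:ℝ)+n) * x := by
      have := hx.1
      rw [div_lt_iff₀ (by positivity)] at this
      linarith
    have h3 : (0:ℝ) < t - (k:ℝ)*x := by linarith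
    have h4 : t - ((k:ℝ)+n)*x < 0 := by linarith
    have h5 : (0:ℝ) < (k:ℝ) * x ^ a * (t - (k:ℝ)*x) ^ b := by positivity
    exact mul_neg_of_pos_of_neg h5 h4

theorem eigenvalue_product_bounds {m k : ℕ} (hm : 2 ≤ m) (hk1 : 1 ≤ k) (hkm : k ≤ m)
    (t d ghat gbar : ℝ) (ht : 0 < t) (hd : 0 < d)
    (hdt : d ^ ((1 : ℝ) / (m : ℝ)) ≤ t / (m : ℝ))
    (hcase :
      (k ≤ m - 1 ∧ ghat ∈ Set.Icc (0 : ℝ) (t / (m : ℝ)) ∧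
        gbar ∈ Set.Icc (t / (m : ℝ)) (t / (k : ℝ)) ∧
        Rfun m k t ghat = d ^ ((1 : ℝ) / (m : ℝ)) ∧
        Rfun m k t gbar = d ^ ((1 : ℝ) / (m : ℝ))) ∨
      (k = m ∧ ghat = d ^ ((1 : ℝ) / (m : ℝ)) ∧ gbar = t / (m : ℝ)))
    (B : Matrix (Fin m) (Fin m) ℝ) (hB : B.PosDef)
    (γ : Fin m → ℝ) (hmono : Monotone γ)
    (hγ : ∃ σ : Equiv.Perm (Fin m), γ = hB.1.eigenvalues ∘ σ)
    (hdet : d ≤ (B⁻¹).det) (htr : (B⁻¹).trace ≤ t)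
    (ι : Fin k → Fin m) (hι : StrictMono ι) :
    ghat ≤ (∏ j, (γ (ι j))⁻¹) ^ ((1 : ℝ) / (k : ℝ)) ∧
    (∏ j, (γ (ι j))⁻¹) ^ ((1 : ℝ) / (k : ℝ)) ≤ gbar := by
  obtain ⟨σ, hσ⟩ := hγ
  have hγpos : ∀ i, 0 < γ i := by
    intro i; rw [hσ]; exact hB.eigenvalues_pos _
  obtain ⟨htr_eq, hdet_eq⟩ := trace_det_inv B hB
  have hsum_le : ∑ i, (γ i)⁻¹ ≤ t := by
    rw [hσ]
    calc ∑ i, ((hB.1.eigenvalues ∘ σ) i)⁻¹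
        = ∑ i, (hB.1.eigenvalues i)⁻¹ := Equiv.sum_comp σ fun i => (hB.1.eigenvalues i)⁻¹
      _ = (B⁻¹).trace := htr_eq.symm
      _ ≤ t := htr
  have hprod_ge : d ≤ ∏ i, (γ i)⁻¹ := by
    rw [hσ]
    calc d ≤ (B⁻¹).det := hdet
      _ = ∏ i, (hB.1.eigenvalues i)⁻¹ := hdet_eq
      _ = ∏ i, ((hB.1.eigenvalues ∘ σ) i)⁻¹ :=
          (Equiv.prod_comp σ fun i => (hB.1.eigenvalues i)⁻¹).symm
  have hk0 : (0 : ℝ) < k := by exact_mod_cast hk1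
  have hm0 : (0 : ℝ) < m := by positivity
  set p := ∏ j, (γ (ι j))⁻¹ with hp_def
  have hppos : 0 < p := Finset.prod_pos fun j _ => inv_pos.mpr (hγpos _)
  set g := p ^ ((1 : ℝ) / (k : ℝ)) with hg_def
  have hgpos : 0 < g := Real.rpow_pos_of_pos hppos _
  have hgk : g ^ k = p := by
    rw [hg_def, one_div, Real.rpow_inv_natCast_pow hppos.le (by omega)]
  -- chosen sum bounds
  have hcho_le : ∑ j, (γ (ι j))⁻¹ ≤ ∑ i, (γ i)⁻¹ := by
    have himg : ∑ i ∈ Finset.univ.image ι, (γ i)⁻¹ = ∑ j, (γ (ι j))⁻¹ :=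
      Finset.sum_image (fun a _ b _ h => hι.injective h)
    rw [← himg]
    exact Finset.sum_le_sum_of_subset_of_nonneg (Finset.subset_univ _)
      (fun i _ _ => (inv_pos.mpr (hγpos i)).le)
  have hkg : (k : ℝ) * g ≤ ∑ j, (γ (ι j))⁻¹ := by
    have hne : (Finset.univ : Finset (Fin k)).Nonempty := ⟨⟨0, hk1⟩, Finset.mem_univ _⟩
    have h := amgm Finset.univ hne (fun j => (γ (ι j))⁻¹)
      (fun j _ => (inv_pos.mpr (hγpos _)).le)
    rw [Finset.card_univ, Fintype.card_fin] at h
    rw [mul_comm, ← le_div_iff₀ hk0]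
    exact h
  have hgtk : g ≤ t / k := by
    rw [le_div_iff₀ hk0, mul_comm]
    linarith
  rcases hcase with ⟨hkm1, ⟨hghat0, hghat1⟩, ⟨hgbar0, hgbar1⟩, hRhat, hRbar⟩ |
    ⟨hkm', hghat, hgbar⟩
  · -- case k ≤ m - 1
    have hklt : k < m := by omega
    set n := m - k with hn_def
    have hn1 : 1 ≤ n := by omega
    have hn0 : (0 : ℝ) < n := by exact_mod_cast hn1
    have hcast : (m : ℝ) - (k : ℝ) = (n : ℝ) := by
      have := Nat.cast_sub hkm (R := ℝ)
      rw [hn_def]; linarith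
    have hmkn : (m : ℝ) = (k : ℝ) + (n : ℝ) := by linarith
    have hQ : ∀ x : ℝ, 0 ≤ x → (k : ℝ) * x ≤ t → Rfun m k t x = d ^ ((1 : ℝ) / (m : ℝ)) →
        x ^ k * (t - (k : ℝ) * x) ^ n = d * (n : ℝ) ^ n := by
      intro x hx0 hxk hR
      have h1 : 0 ≤ t - (k : ℝ) * x := by linarith
      have hnn : 0 ≤ x ^ k * ((t - (k : ℝ) * x) / (n : ℝ)) ^ n := by positivity
      have hm0' : m ≠ 0 := by omega
      unfold Rfun at hR
      rw [hcast, ← hn_def] at hR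
      have h2 := congrArg (fun y : ℝ => y ^ m) hR
      simp only [one_div] at h2
      rw [Real.rpow_inv_natCast_pow hnn hm0', Real.rpow_inv_natCast_pow hd.le hm0'] at h2
      have h3 : x ^ k * (t - (k : ℝ) * x) ^ n
          = (x ^ k * ((t - (k : ℝ) * x) / (n : ℝ)) ^ n) * (n : ℝ) ^ n := by
        rw [div_pow]; field_simp
      rw [h3, h2]
    have hQhat : ghat ^ k * (t - (k : ℝ) * ghat) ^ n = d * (n : ℝ) ^ n := by
      apply hQ ghat hghat0 _ hRhat
      have h1 : ghat * (m : ℝ) ≤ t := (le_div_iff₀ hm0).mp hghat1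
      have h2 : (k : ℝ) ≤ (m : ℝ) := Nat.cast_le.mpr hkm
      nlinarith [hghat0]
    have hQbar : gbar ^ k * (t - (k : ℝ) * gbar) ^ n = d * (n : ℝ) ^ n := by
      apply hQ gbar _ _ hRbar
      · have : (0:ℝ) ≤ t / m := by positivity
        linarith
      · have h1 : gbar * (k : ℝ) ≤ t := (le_div_iff₀ hk0).mp hgbar1
        linarith
    -- rest product bound
    set s := Finset.univ.image ι with hs_def
    have hcard_s : s.card = k := by
      rw [hs_def, Finset.card_image_of_injective _ hι.injective, Finset.card_univ,
        Fintype.card_fin]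
    have hcard_c : sᶜ.card = n := by
      rw [Finset.card_compl, hcard_s, Fintype.card_fin]
    have hcne : sᶜ.Nonempty := Finset.card_pos.mp (by rw [hcard_c]; omega)
    have hps : ∏ i ∈ s, (γ i)⁻¹ = p :=
      Finset.prod_image (fun a _ b _ h => hι.injective h)
    set q := ∏ i ∈ sᶜ, (γ i)⁻¹ with hq_def
    have hqpos : 0 < q := Finset.prod_pos fun i _ => inv_pos.mpr (hγpos i)
    have hsum_split : ∑ i ∈ s, (γ i)⁻¹ + ∑ i ∈ sᶜ, (γ i)⁻¹ = ∑ i, (γ i)⁻¹ :=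
      Finset.sum_add_sum_compl s _
    have hsum_s : ∑ i ∈ s, (γ i)⁻¹ = ∑ j, (γ (ι j))⁻¹ :=
      Finset.sum_image (fun a _ b _ h => hι.injective h)
    have hrest_le : ∑ i ∈ sᶜ, (γ i)⁻¹ ≤ t - (k : ℝ) * g := by
      have := hsum_le
      rw [← hsum_split, hsum_s] at this
      linarith
    have hrest_nonneg : 0 ≤ ∑ i ∈ sᶜ, (γ i)⁻¹ :=
      Finset.sum_nonneg fun i _ => (inv_pos.mpr (hγpos i)).le
    have hamgm := amgm sᶜ hcne (fun i => (γ i)⁻¹)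
      (fun i _ => (inv_pos.mpr (hγpos i)).le)
    rw [hcard_c] at hamgm
    have hq_le : q ≤ ((t - (k : ℝ) * g) / (n : ℝ)) ^ n := by
      have h1 : q = (q ^ ((1 : ℝ) / (n : ℝ))) ^ n := by
        rw [one_div, Real.rpow_inv_natCast_pow hqpos.le (by omega)]
      rw [h1]
      apply pow_le_pow_left₀ (Real.rpow_nonneg hqpos.le _) _ n
      calc q ^ ((1 : ℝ) / (n : ℝ)) ≤ (∑ i ∈ sᶜ, (γ i)⁻¹) / (n : ℝ) := hamgm
        _ ≤ (t - (k : ℝ) * g) / (n : ℝ) := by gcongr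
    have hFg : d * (n : ℝ) ^ n ≤ g ^ k * (t - (k : ℝ) * g) ^ n := by
      have key : d ≤ g ^ k * ((t - (k : ℝ) * g) / (n : ℝ)) ^ n := by
        calc d ≤ ∏ i, (γ i)⁻¹ := hprod_ge
          _ = (∏ i ∈ s, (γ i)⁻¹) * q := (Finset.prod_mul_prod_compl s _).symm
          _ = g ^ k * q := by rw [hps, hgk]
          _ ≤ g ^ k * ((t - (k : ℝ) * g) / (n : ℝ)) ^ n :=
              mul_le_mul_of_nonneg_left hq_le (by positivity)
      calc d * (n : ℝ) ^ n
          ≤ (g ^ k * ((t - (k : ℝ) * g) / (n : ℝ)) ^ n) * (n : ℝ) ^ n :=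
            mul_le_mul_of_nonneg_right key (by positivity)
        _ = g ^ k * (t - (k : ℝ) * g) ^ n := by rw [div_pow]; field_simp
    obtain ⟨hFmo, hFan⟩ := Fmono k n hk1 hn1 t ht
    have htm : t / (m : ℝ) = t / ((k : ℝ) + (n : ℝ)) := by rw [hmkn]
    constructor
    · by_contra hcon
      push_neg at hcon
      have hgIcc : g ∈ Set.Icc (0 : ℝ) (t / ((k : ℝ) + (n : ℝ))) :=
        ⟨hgpos.le, by rw [← htm]; linarith⟩
      have hhIcc : ghat ∈ Set.Icc (0 : ℝ) (t / ((k : ℝ) + (n : ℝ))) :=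
        ⟨hghat0, by rw [← htm]; exact hghat1⟩
      have hlt := hFmo hgIcc hhIcc hcon
      simp only at hlt
      rw [hQhat] at hlt
      linarith
    · by_contra hcon
      push_neg at hcon
      have hbIcc : gbar ∈ Set.Icc (t / ((k : ℝ) + (n : ℝ))) (t / (k : ℝ)) :=
        ⟨by rw [← htm]; exact hgbar0, hgbar1⟩
      have hgIcc : g ∈ Set.Icc (t / ((k : ℝ) + (n : ℝ))) (t / (k : ℝ)) :=
        ⟨by rw [← htm]; linarith, hgtk⟩
      have hlt := hFan hbIcc hgIcc hcon
      simp only at hlt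
      rw [hQbar] at hlt
      linarith
  · -- case k = m
    subst hkm'
    constructor
    · rw [hghat]
      apply Real.rpow_le_rpow hd.le _ (by positivity)
      have hbij : Function.Bijective ι := Finite.injective_iff_bijective.mp hι.injective
      calc d ≤ ∏ i, (γ i)⁻¹ := hprod_ge
        _ = ∏ j, (γ (ι j))⁻¹ := (hbij.prod_comp fun i => (γ i)⁻¹).symm
    · rw [hgbar]; exact hgtk
end

section
/- (Rank-two determinant update identity.) Let m ≥ 2, let M be an invertible m×m real matrix, let u, v ∈ ℝ^m, and let c ∈ ℝ. Then det(M + c·(uuᵀ − vvᵀ)) = det(M)·(1 + c·tr(M⁻¹(uuᵀ − vvᵀ)) − c²·det([v | u]ᵀ M⁻¹ [v | u])), where [v | u] is the m×2 matrix with columns v and u. -/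
open Matrix BigOperators

theorem rank_two_det_update {m : ℕ} (hm : 2 ≤ m)
    (M : Matrix (Fin m) (Fin m) ℝ) (hM : IsUnit M.det)
    (u v : Fin m → ℝ) (c : ℝ) :
    (M + c • (vecMulVec u u - vecMulVec v v)).det =
      M.det * (1 + c * (M⁻¹ * (vecMulVec u u - vecMulVec v v)).trace
        - c ^ 2 * ((colPair v u)ᵀ * M⁻¹ * colPair v u).det) := by
  set A := M⁻¹ with hA
  have hMA : M * A = 1 := mul_nonsing_inv M hM
  set U := colPair v u with hUdef
  set D : Matrix (Fin 2) (Fin 2) ℝ := !![-c, 0; 0, c] with hD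
  set B := Uᵀ * A * U with hB
  have hU : c • (vecMulVec u u - vecMulVec v v) = U * D * Uᵀ := by
    ext i j
    simp [Matrix.mul_apply, Fin.sum_univ_two, colPair, vecMulVec_apply, hD, hUdef]
    ring
  rw [hU]
  have key : M + U * D * Uᵀ = M * (1 + A * (U * D * Uᵀ)) := by
    rw [Matrix.mul_add, Matrix.mul_one, ← Matrix.mul_assoc, hMA, Matrix.one_mul]
  rw [key, det_mul]
  congr 1
  have h2 : (1 + A * (U * D * Uᵀ)).det = (1 + (D * Uᵀ) * (A * U)).det := by
    rw [show A * (U * D * Uᵀ) = (A * U) * (D * Uᵀ) by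
      simp only [Matrix.mul_assoc]]
    exact Matrix.det_one_add_mul_comm _ _
  rw [h2]
  have hDB : (D * Uᵀ) * (A * U) = D * B := by
    simp only [hB, Matrix.mul_assoc]
  rw [hDB]
  have hdet2 : (1 + D * B).det =
      1 + c * (B 1 1 - B 0 0) - c ^ 2 * (B 0 0 * B 1 1 - B 0 1 * B 1 0) := by
    rw [Matrix.det_fin_two]
    simp only [Matrix.add_apply, Matrix.one_apply, Matrix.mul_apply, Fin.sum_univ_two, hD,
      Matrix.cons_val', Matrix.cons_val_zero, Matrix.cons_val_one, Matrix.head_cons,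
      Matrix.empty_val', Matrix.cons_val_fin_one, Matrix.head_fin_const]
    norm_num
    ring
  rw [hdet2, Matrix.det_fin_two]
  have htr : (A * (vecMulVec u u - vecMulVec v v)).trace = B 1 1 - B 0 0 := by
    have h11 : B 1 1 = ∑ i, ∑ j, A i j * u j * u i := by
      simp only [hB, Matrix.mul_apply, Finset.sum_mul, hUdef, colPair,
        Matrix.transpose_apply, Matrix.of_apply]
      rw [Finset.sum_comm]
      exact Finset.sum_congr rfl fun i _ => Finset.sum_congr rfl fun j _ => by
        simp [Fin.sum_univ_two]; ring
    have h00 : B 0 0 = ∑ i, ∑ j, A i j * v j * v i := by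
      simp only [hB, Matrix.mul_apply, Finset.sum_mul, hUdef, colPair,
        Matrix.transpose_apply, Matrix.of_apply]
      rw [Finset.sum_comm]
      exact Finset.sum_congr rfl fun i _ => Finset.sum_congr rfl fun j _ => by
        simp [Fin.sum_univ_two]; ring
    rw [h11, h00]
    simp only [Matrix.trace, Matrix.diag, Matrix.mul_apply, Matrix.sub_apply,
      vecMulVec_apply, mul_sub, Finset.sum_sub_distrib]
    congr 1 <;>
      exact Finset.sum_congr rfl fun i _ => Finset.sum_congr rfl fun j _ => by ring
  rw [htr]
end
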